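/- arXiv:1504.01248 — 10 statements merged into one kernel-verified Lean document; each statement's English description precedes it below -/
import Mathlib

section
/- For every n ∈ ℕ, the value-iteration function v_n is nondecreasing in each coordinate: v_n(x + e_1) ≥ v_n(x) and v_n(x + e_2) ≥ v_n(x) for all x ∈ E. (Property 4.1(i).) -/
open Set

/-- Transition `D₁x = x - e₁ + e₂` if `x₁ ≥ 1`, else `x`. -/
def D1 (x : ℕ × ℕ) : ℕ × ℕ := if 1 ≤ x.1 then (x.1 - 1, x.2 + 1) else x

/-- Transition `D₂x = x - e₂` if `x₂ ≥ 1`, else `x`. -/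
def D2 (x : ℕ × ℕ) : ℕ × ℕ := if 1 ≤ x.2 then (x.1, x.2 - 1) else x

/-- Node-1 dynamic programming operator:
`T₁v(x) = min_{a ∈ [0,a_max]} { μ₁(a) v(D₁x) + (μ₁(a_max) − μ₁(a)) v(x) + c₁(a) }`. -/
noncomputable def T1 (amax : ℝ) (mu1 c1 : ℝ → ℝ) (v : ℕ × ℕ → ℝ) (x : ℕ × ℕ) : ℝ :=
  sInf ((fun a => mu1 a * v (D1 x) + (mu1 amax - mu1 a) * v x + c1 a) '' Icc 0 amax)

/-- Node-2 dynamic programming operator: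
`T₂v(x) = min_{b ∈ [0,b_max]} { μ₂(b) v(D₂x) + (μ₂(b_max) − μ₂(b)) v(x) + c₂(b) }`. -/
noncomputable def T2 (bmax : ℝ) (mu2 c2 : ℝ → ℝ) (v : ℕ × ℕ → ℝ) (x : ℕ × ℕ) : ℝ :=
  sInf ((fun b => mu2 b * v (D2 x) + (mu2 bmax - mu2 b) * v x + c2 b) '' Icc 0 bmax)

/-- Set of minimizers in the node-1 operator. -/
def argT1 (amax : ℝ) (mu1 c1 : ℝ → ℝ) (v : ℕ × ℕ → ℝ) (x : ℕ × ℕ) : Set ℝ :=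
  {a | a ∈ Icc 0 amax ∧
    mu1 a * v (D1 x) + (mu1 amax - mu1 a) * v x + c1 a = T1 amax mu1 c1 v x}

/-- Set of minimizers in the node-2 operator. -/
def argT2 (bmax : ℝ) (mu2 c2 : ℝ → ℝ) (v : ℕ × ℕ → ℝ) (x : ℕ × ℕ) : Set ℝ :=
  {b | b ∈ Icc 0 bmax ∧
    mu2 b * v (D2 x) + (mu2 bmax - mu2 b) * v x + c2 b = T2 bmax mu2 c2 v x}

/-- Full dynamic programming operator
`Tv(x) = λ v(x+e₁) + T₁v(x) + T₂v(x) + h₁x₁ + h₂x₂`. -/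
noncomputable def T (lam amax bmax h1 h2 : ℝ) (mu1 mu2 c1 c2 : ℝ → ℝ)
    (v : ℕ × ℕ → ℝ) (x : ℕ × ℕ) : ℝ :=
  lam * v (x.1 + 1, x.2) + T1 amax mu1 c1 v x + T2 bmax mu2 c2 v x +
    h1 * (x.1 : ℝ) + h2 * (x.2 : ℝ)

/-- Value iteration: `v₀ ≡ 0`, `v_{n+1} = T v_n`. -/
noncomputable def vIter (lam amax bmax h1 h2 : ℝ) (mu1 mu2 c1 c2 : ℝ → ℝ) :
    ℕ → (ℕ × ℕ → ℝ)
  | 0 => fun _ => 0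
  | n + 1 => T lam amax bmax h1 h2 mu1 mu2 c1 c2
      (vIter lam amax bmax h1 h2 mu1 mu2 c1 c2 n)


lemma sInf_image_mono_aux {S : Set ℝ} (hS : S.Nonempty) {f g : ℝ → ℝ}
    (hbdd : BddBelow (f '' S)) (h : ∀ a ∈ S, f a ≤ g a) :
    sInf (f '' S) ≤ sInf (g '' S) := by
  apply le_csInf (hS.image g)
  rintro _ ⟨a, ha, rfl⟩
  exact le_trans (csInf_le hbdd ⟨a, ha, rfl⟩) (h a ha)

lemma Top_mono (m : ℝ) (hm : 0 < m) (mu c : ℝ → ℝ)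
    (hmuc : ContinuousOn mu (Icc 0 m)) (hcc : ContinuousOn c (Icc 0 m))
    (hmum : StrictMonoOn mu (Icc 0 m)) (hmu0 : mu 0 = 0)
    (A B C D : ℝ) (hAB : A ≤ B) (hCD : C ≤ D) :
    sInf ((fun a => mu a * A + (mu m - mu a) * C + c a) '' Icc 0 m) ≤
      sInf ((fun a => mu a * B + (mu m - mu a) * D + c a) '' Icc 0 m) := by
  apply sInf_image_mono_aux (nonempty_Icc.mpr hm.le)
  · exact (isCompact_Icc.image_of_continuousOn
      (((hmuc.mul continuousOn_const).add
        ((continuousOn_const.sub hmuc).mul continuousOn_const)).add hcc)).bddBelow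
  · intro a ha
    have h0 : (0:ℝ) ≤ mu a := by
      rw [← hmu0]
      rcases eq_or_lt_of_le ha.1 with h | h
      · rw [← h]
      · exact (hmum (left_mem_Icc.mpr hm.le) ha h).le
    have hmax : mu a ≤ mu m := by
      rcases eq_or_lt_of_le ha.2 with h | h
      · rw [h]
      · exact (hmum ha (right_mem_Icc.mpr hm.le) h).le
    have h1 := mul_le_mul_of_nonneg_left hAB h0
    have h2 := mul_le_mul_of_nonneg_left hCD (sub_nonneg.mpr hmax)
    linarith

theorem property_4_1_i
    (lam amax bmax h1 h2 : ℝ) (mu1 mu2 c1 c2 : ℝ → ℝ)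
    (hlam : 0 < lam) (hamax : 0 < amax) (hbmax : 0 < bmax)
    (hmu1c : ContinuousOn mu1 (Icc 0 amax)) (hmu1m : StrictMonoOn mu1 (Icc 0 amax))
    (hmu2c : ContinuousOn mu2 (Icc 0 bmax)) (hmu2m : StrictMonoOn mu2 (Icc 0 bmax))
    (hc1c : ContinuousOn c1 (Icc 0 amax)) (hc1m : StrictMonoOn c1 (Icc 0 amax))
    (hc2c : ContinuousOn c2 (Icc 0 bmax)) (hc2m : StrictMonoOn c2 (Icc 0 bmax))
    (hmu10 : mu1 0 = 0) (hmu20 : mu2 0 = 0) (hc10 : c1 0 = 0) (hc20 : c2 0 = 0)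
    (hh1 : 0 ≤ h1) (hh2 : 0 ≤ h2)
    (huni : lam + mu1 amax + mu2 bmax = 1) :
    ∀ (n : ℕ) (x : ℕ × ℕ),
      vIter lam amax bmax h1 h2 mu1 mu2 c1 c2 n (x.1 + 1, x.2) ≥ vIter lam amax bmax h1 h2 mu1 mu2 c1 c2 n x ∧
      vIter lam amax bmax h1 h2 mu1 mu2 c1 c2 n (x.1, x.2 + 1) ≥ vIter lam amax bmax h1 h2 mu1 mu2 c1 c2 n x  := by
  intro n
  induction n with
  | zero => intro x; simp [vIter]
  | succ n ih =>
    intro x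
    -- abbreviations
    set w := vIter lam amax bmax h1 h2 mu1 mu2 c1 c2 n with hw
    have step1 : ∀ y : ℕ × ℕ, w y ≤ w (y.1 + 1, y.2) := fun y => (ih y).1
    have step2 : ∀ y : ℕ × ℕ, w y ≤ w (y.1, y.2 + 1) := fun y => (ih y).2
    obtain ⟨x1, x2⟩ := x
    have hD1a : w (D1 (x1, x2)) ≤ w (D1 (x1 + 1, x2)) := by
      rcases x1 with _ | k
      · simpa [D1] using step2 (0, x2)
      · simpa [D1, Nat.succ_sub_one] using step1 (k, x2 + 1)
    have hD1b : w (D1 (x1, x2)) ≤ w (D1 (x1, x2 + 1)) := by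
      rcases x1 with _ | k
      · simpa [D1] using step2 (0, x2)
      · simpa [D1, Nat.succ_sub_one] using step2 (k, x2 + 1)
    have hD2a : w (D2 (x1, x2)) ≤ w (D2 (x1 + 1, x2)) := by
      rcases x2 with _ | k
      · simpa [D2] using step1 (x1, 0)
      · simpa [D2, Nat.succ_sub_one] using step1 (x1, k)
    have hD2b : w (D2 (x1, x2)) ≤ w (D2 (x1, x2 + 1)) := by
      rcases x2 with _ | k
      · simp [D2]
      · simpa [D2, Nat.succ_sub_one] using step2 (x1, k)
    have hxa : w (x1, x2) ≤ w (x1 + 1, x2) := step1 (x1, x2)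
    have hxb : w (x1, x2) ≤ w (x1, x2 + 1) := step2 (x1, x2)
    constructor
    · show T lam amax bmax h1 h2 mu1 mu2 c1 c2 w (x1, x2) ≤
        T lam amax bmax h1 h2 mu1 mu2 c1 c2 w (x1 + 1, x2)
      unfold T
      have hA : lam * w ((x1, x2).1 + 1, (x1, x2).2) ≤
          lam * w ((x1 + 1, x2).1 + 1, (x1 + 1, x2).2) :=
        mul_le_mul_of_nonneg_left (step1 (x1 + 1, x2)) hlam.le
      have hT1 : T1 amax mu1 c1 w (x1, x2) ≤ T1 amax mu1 c1 w (x1 + 1, x2) :=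
        Top_mono amax hamax mu1 c1 hmu1c hc1c hmu1m hmu10 _ _ _ _ hD1a hxa
      have hT2 : T2 bmax mu2 c2 w (x1, x2) ≤ T2 bmax mu2 c2 w (x1 + 1, x2) :=
        Top_mono bmax hbmax mu2 c2 hmu2c hc2c hmu2m hmu20 _ _ _ _ hD2a hxa
      have hh : h1 * ((x1, x2).1 : ℝ) ≤ h1 * ((x1 + 1 : ℕ) : ℝ) := by
        apply mul_le_mul_of_nonneg_left _ hh1
        push_cast; linarith
      simp only [ge_iff_le]
      push_cast
      push_cast at hA hh
      linarith
    · show T lam amax bmax h1 h2 mu1 mu2 c1 c2 w (x1, x2) ≤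
        T lam amax bmax h1 h2 mu1 mu2 c1 c2 w (x1, x2 + 1)
      unfold T
      have hA : lam * w ((x1, x2).1 + 1, (x1, x2).2) ≤
          lam * w ((x1, x2 + 1).1 + 1, (x1, x2 + 1).2) :=
        mul_le_mul_of_nonneg_left (step2 (x1 + 1, x2)) hlam.le
      have hT1 : T1 amax mu1 c1 w (x1, x2) ≤ T1 amax mu1 c1 w (x1, x2 + 1) :=
        Top_mono amax hamax mu1 c1 hmu1c hc1c hmu1m hmu10 _ _ _ _ hD1b hxb
      have hT2 : T2 bmax mu2 c2 w (x1, x2) ≤ T2 bmax mu2 c2 w (x1, x2 + 1) :=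
        Top_mono bmax hbmax mu2 c2 hmu2c hc2c hmu2m hmu20 _ _ _ _ hD2b hxb
      have hh : h2 * ((x1, x2).2 : ℝ) ≤ h2 * ((x2 + 1 : ℕ) : ℝ) := by
        apply mul_le_mul_of_nonneg_left _ hh2
        push_cast; linarith
      simp only [ge_iff_le]
      push_cast
      push_cast at hA hh
      linarith
end

section
/- Assume h₁ ≥ h₂. Then for every n ∈ ℕ and every x = (x₁, x₂) ∈ E with x₁ ≥ 1 and x₂ ≥ 1, the value-iteration function satisfies v_n(x) ≥ v_n(x − e₁ + e₂). (Property 4.1(iii).) -/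
open Set

lemma key (amax : ℝ) (h0 : (0:ℝ) ≤ amax) (mu c : ℝ → ℝ)
    (hmuc : ContinuousOn mu (Icc 0 amax)) (hcc : ContinuousOn c (Icc 0 amax))
    (hmum : MonotoneOn mu (Icc 0 amax)) (hmu0 : mu 0 = 0)
    (w2 w1 u2 u1 : ℝ) (hw : w2 ≤ w1) (hu : u2 ≤ u1) :
    sInf ((fun a => mu a * w2 + (mu amax - mu a) * u2 + c a) '' Icc 0 amax) ≤
    sInf ((fun a => mu a * w1 + (mu amax - mu a) * u1 + c a) '' Icc 0 amax) := by
  have hne : (Icc (0:ℝ) amax).Nonempty := nonempty_Icc.2 h0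
  have hg : ContinuousOn (fun a => mu a * w2 + (mu amax - mu a) * u2 + c a) (Icc 0 amax) :=
    ((hmuc.mul continuousOn_const).add
      ((continuousOn_const.sub hmuc).mul continuousOn_const)).add hcc
  have hbdd : BddBelow ((fun a => mu a * w2 + (mu amax - mu a) * u2 + c a) '' Icc 0 amax) :=
    (isCompact_Icc.image_of_continuousOn hg).bddBelow
  apply le_csInf (hne.image _)
  rintro y ⟨a, ha, rfl⟩
  have hmem0 : (0:ℝ) ∈ Icc (0:ℝ) amax := ⟨le_rfl, h0⟩
  have hmemA : amax ∈ Icc (0:ℝ) amax := ⟨h0, le_rfl⟩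
  have hma : 0 ≤ mu a := hmu0 ▸ hmum hmem0 ha ha.1
  have hma2 : 0 ≤ mu amax - mu a := sub_nonneg.2 (hmum ha hmemA ha.2)
  calc sInf _ ≤ mu a * w2 + (mu amax - mu a) * u2 + c a := csInf_le hbdd ⟨a, ha, rfl⟩
    _ ≤ mu a * w1 + (mu amax - mu a) * u1 + c a :=
      add_le_add (add_le_add (mul_le_mul_of_nonneg_left hw hma)
        (mul_le_mul_of_nonneg_left hu hma2)) le_rfl

lemma T_le (lam amax bmax h1 h2 : ℝ) (mu1 mu2 c1 c2 : ℝ → ℝ)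
    (hlam : 0 ≤ lam) (ha : (0:ℝ) ≤ amax) (hb : (0:ℝ) ≤ bmax)
    (hmu1c : ContinuousOn mu1 (Icc 0 amax)) (hc1c : ContinuousOn c1 (Icc 0 amax))
    (hmu1m : MonotoneOn mu1 (Icc 0 amax)) (hmu10 : mu1 0 = 0)
    (hmu2c : ContinuousOn mu2 (Icc 0 bmax)) (hc2c : ContinuousOn c2 (Icc 0 bmax))
    (hmu2m : MonotoneOn mu2 (Icc 0 bmax)) (hmu20 : mu2 0 = 0)
    (v : ℕ × ℕ → ℝ) (x x' : ℕ × ℕ)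
    (hlamv : v (x.1+1, x.2) ≤ v (x'.1+1, x'.2))
    (hD1 : v (D1 x) ≤ v (D1 x')) (hD2 : v (D2 x) ≤ v (D2 x'))
    (hv : v x ≤ v x')
    (hhold : h1*(x.1:ℝ)+h2*(x.2:ℝ) ≤ h1*(x'.1:ℝ)+h2*(x'.2:ℝ)) :
    T lam amax bmax h1 h2 mu1 mu2 c1 c2 v x ≤ T lam amax bmax h1 h2 mu1 mu2 c1 c2 v x' := by
  have hT1 : T1 amax mu1 c1 v x ≤ T1 amax mu1 c1 v x' :=
    key amax ha mu1 c1 hmu1c hc1c hmu1m hmu10 _ _ _ _ hD1 hv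
  have hT2 : T2 bmax mu2 c2 v x ≤ T2 bmax mu2 c2 v x' :=
    key bmax hb mu2 c2 hmu2c hc2c hmu2m hmu20 _ _ _ _ hD2 hv
  have hl := mul_le_mul_of_nonneg_left hlamv hlam
  unfold T
  linarith

theorem property_4_1_iii
    (lam amax bmax h1 h2 : ℝ) (mu1 mu2 c1 c2 : ℝ → ℝ)
    (hlam : 0 < lam) (hamax : 0 < amax) (hbmax : 0 < bmax)
    (hmu1c : ContinuousOn mu1 (Icc 0 amax)) (hmu1m : StrictMonoOn mu1 (Icc 0 amax))
    (hmu2c : ContinuousOn mu2 (Icc 0 bmax)) (hmu2m : StrictMonoOn mu2 (Icc 0 bmax))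
    (hc1c : ContinuousOn c1 (Icc 0 amax)) (hc1m : StrictMonoOn c1 (Icc 0 amax))
    (hc2c : ContinuousOn c2 (Icc 0 bmax)) (hc2m : StrictMonoOn c2 (Icc 0 bmax))
    (hmu10 : mu1 0 = 0) (hmu20 : mu2 0 = 0) (hc10 : c1 0 = 0) (hc20 : c2 0 = 0)
    (hh1 : 0 ≤ h1) (hh2 : 0 ≤ h2)
    (huni : lam + mu1 amax + mu2 bmax = 1)
    (hh : h1 ≥ h2) :
    ∀ (n : ℕ) (x : ℕ × ℕ), 1 ≤ x.1 → 1 ≤ x.2 →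
      vIter lam amax bmax h1 h2 mu1 mu2 c1 c2 n x ≥ vIter lam amax bmax h1 h2 mu1 mu2 c1 c2 n (x.1 - 1, x.2 + 1) := by
  have key3 : ∀ n : ℕ,
      (∀ x : ℕ × ℕ, vIter lam amax bmax h1 h2 mu1 mu2 c1 c2 n x ≤
        vIter lam amax bmax h1 h2 mu1 mu2 c1 c2 n (x.1 + 1, x.2)) ∧
      (∀ x : ℕ × ℕ, vIter lam amax bmax h1 h2 mu1 mu2 c1 c2 n x ≤
        vIter lam amax bmax h1 h2 mu1 mu2 c1 c2 n (x.1, x.2 + 1)) ∧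
      (∀ x : ℕ × ℕ, 1 ≤ x.1 → vIter lam amax bmax h1 h2 mu1 mu2 c1 c2 n (x.1 - 1, x.2 + 1) ≤
        vIter lam amax bmax h1 h2 mu1 mu2 c1 c2 n x) := by
    intro n
    induction n with
    | zero => simp [vIter]
    | succ n ih =>
      obtain ⟨A, B, C⟩ := ih
      set v := vIter lam amax bmax h1 h2 mu1 mu2 c1 c2 n with hvdef
      have hstep : ∀ y : ℕ × ℕ, vIter lam amax bmax h1 h2 mu1 mu2 c1 c2 (n+1) y =
          T lam amax bmax h1 h2 mu1 mu2 c1 c2 v y := fun _ => rfl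
      have Tle := T_le lam amax bmax h1 h2 mu1 mu2 c1 c2 hlam.le hamax.le hbmax.le
        hmu1c hc1c hmu1m.monotoneOn hmu10 hmu2c hc2c hmu2m.monotoneOn hmu20 v
      refine ⟨?_, ?_, ?_⟩
      · -- monotone in first coordinate
        intro x
        rw [hstep, hstep]
        apply Tle
        · exact A (x.1 + 1, x.2)
        · by_cases h : 1 ≤ x.1
          · have hx : x.1 - 1 + 1 = x.1 := by omega
            simp only [D1, h, if_true, show 1 ≤ x.1 + 1 by omega, Nat.add_sub_cancel]
            simpa [hx] using A (x.1 - 1, x.2 + 1)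
          · simp only [D1, h, if_false, show 1 ≤ x.1 + 1 by omega, if_true, Nat.add_sub_cancel]
            exact B x
        · by_cases h : 1 ≤ x.2
          · simp only [D2, h, if_true]
            exact A (x.1, x.2 - 1)
          · simp only [D2, h, if_false]
            exact A x
        · exact A x
        · push_cast
          nlinarith
      · -- monotone in second coordinate
        intro x
        rw [hstep, hstep]
        apply Tle
        · exact B (x.1 + 1, x.2)
        · by_cases h : 1 ≤ x.1
          · simp only [D1, h, if_true]
            exact B (x.1 - 1, x.2 + 1)
          · simp only [D1, h, if_false]
            exact B x
        · by_cases h : 1 ≤ x.2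
          · have hx : x.2 - 1 + 1 = x.2 := by omega
            simp only [D2, h, if_true, show 1 ≤ x.2 + 1 by omega, Nat.add_sub_cancel]
            simpa [hx] using B (x.1, x.2 - 1)
          · have hx : x.2 = 0 := by omega
            simp only [D2, h, if_false, show 1 ≤ x.2 + 1 by omega, if_true, Nat.add_sub_cancel]
            exact le_rfl
        · exact B x
        · push_cast
          nlinarith
      · -- property (iii)
        intro x hx1
        rw [hstep, hstep]
        apply Tle
        · have hs : x.1 - 1 + 1 = x.1 := by omega
          simp only [hs]
          simpa using C (x.1 + 1, x.2) (by omega)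
        · by_cases h : 2 ≤ x.1
          · have h1' : 1 ≤ x.1 - 1 := by omega
            simp only [D1, hx1, if_true, h1']
            exact C (x.1 - 1, x.2 + 1) h1'
          · have hx : x.1 = 1 := by omega
            have h1' : ¬ 1 ≤ x.1 - 1 := by omega
            simp only [D1]
            rw [if_pos hx1, if_neg h1']
        · by_cases h : 1 ≤ x.2
          · have hx : x.2 - 1 + 1 = x.2 := by omega
            simp only [D2, h, if_true, show 1 ≤ x.2 + 1 by omega, Nat.add_sub_cancel]
            simpa [hx] using C (x.1, x.2 - 1) hx1
          · have hx : x.2 = 0 := by omega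
            simp only [D2, h, if_false, show 1 ≤ x.2 + 1 by omega, if_true, Nat.add_sub_cancel]
            rw [hx]
            have hsub : x.1 - 1 + 1 = x.1 := by omega
            have hxe : x = (x.1, 0) := by rw [← hx]
            have hA := A (x.1 - 1, x.2)
            rw [hx] at hA
            simp only [hsub] at hA
            exact le_trans hA (le_of_eq (congrArg v hxe.symm))
        · exact C x hx1
        · have hc : ((x.1 - 1 : ℕ) : ℝ) = (x.1 : ℝ) - 1 := by
            have : (1:ℕ) ≤ x.1 := hx1
            push_cast [Nat.cast_sub this]
            ring
          simp only [hc]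
          push_cast
          nlinarith
  intro n x hx1 hx2
  exact (key3 n).2.2 x hx1
end

section
/- For every n ∈ ℕ and every x = (x₁, x₂) ∈ E with x₂ ≥ 1, the value-iteration function is convex in the second coordinate: v_n(x + e₂) − 2 v_n(x) + v_n(x − e₂) ≥ 0. (Property 4.2(i).) -/
open Set

namespace Tandem

lemma D1_succ (i k : ℕ) : D1 (i+1, k) = (i, k+1) := by simp [D1]
lemma D1_zero (k : ℕ) : D1 (0, k) = (0, k) := by simp [D1]
lemma D2_succ (i k : ℕ) : D2 (i, k+1) = (i, k) := by simp [D2]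
lemma D2_zero (i : ℕ) : D2 (i, 0) = (i, 0) := by simp [D2]

structure GH (amax : ℝ) (mu c : ℝ → ℝ) : Prop where
  h0 : 0 ≤ amax
  hm : StrictMonoOn mu (Set.Icc 0 amax)
  hc : StrictMonoOn c (Set.Icc 0 amax)
  hm0 : mu 0 = 0
  hc0 : c 0 = 0

noncomputable def gfun (amax : ℝ) (mu c : ℝ → ℝ) (d : ℝ) : ℝ :=
  sInf ((fun a => c a + mu a * d) '' Set.Icc 0 amax)

variable {amax : ℝ} {mu c : ℝ → ℝ}

lemma GH.mu_nonneg (hg : GH amax mu c) {a : ℝ} (ha : a ∈ Set.Icc 0 amax) : 0 ≤ mu a := by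
  have h := hg.hm.monotoneOn (Set.left_mem_Icc.2 hg.h0) ha ha.1
  rw [hg.hm0] at h; exact h

lemma GH.mu_le_max (hg : GH amax mu c) {a : ℝ} (ha : a ∈ Set.Icc 0 amax) : mu a ≤ mu amax :=
  hg.hm.monotoneOn ha (Set.right_mem_Icc.2 hg.h0) ha.2

lemma GH.c_nonneg (hg : GH amax mu c) {a : ℝ} (ha : a ∈ Set.Icc 0 amax) : 0 ≤ c a := by
  have h := hg.hc.monotoneOn (Set.left_mem_Icc.2 hg.h0) ha ha.1
  rw [hg.hc0] at h; exact h

lemma GH.mumax_nonneg (hg : GH amax mu c) : 0 ≤ mu amax :=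
  hg.mu_nonneg (Set.right_mem_Icc.2 hg.h0)

lemma gfun_set_nonempty (hg : GH amax mu c) (d : ℝ) :
    ((fun a => c a + mu a * d) '' Set.Icc 0 amax).Nonempty :=
  ⟨_, Set.mem_image_of_mem _ (Set.left_mem_Icc.2 hg.h0)⟩

lemma gfun_bddBelow (hg : GH amax mu c) (d : ℝ) :
    BddBelow ((fun a => c a + mu a * d) '' Set.Icc 0 amax) := by
  refine ⟨min 0 (mu amax * d), ?_⟩
  rintro y ⟨a, ha, rfl⟩
  show min 0 (mu amax * d) ≤ c a + mu a * d
  have hc' := hg.c_nonneg ha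
  have hmn := hg.mu_nonneg ha
  have hmx := hg.mu_le_max ha
  rcases le_or_gt 0 d with hd | hd
  · have : 0 ≤ mu a * d := mul_nonneg hmn hd
    have := min_le_left (0:ℝ) (mu amax * d)
    linarith
  · have : mu amax * d ≤ mu a * d := mul_le_mul_of_nonpos_right hmx hd.le
    have := min_le_right (0:ℝ) (mu amax * d)
    linarith

lemma gfun_le (hg : GH amax mu c) {a : ℝ} (ha : a ∈ Set.Icc 0 amax) (d : ℝ) :
    gfun amax mu c d ≤ c a + mu a * d :=
  csInf_le (gfun_bddBelow hg d) ⟨a, ha, rfl⟩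

lemma le_gfun (hg : GH amax mu c) {y d : ℝ}
    (h : ∀ a ∈ Set.Icc (0:ℝ) amax, y ≤ c a + mu a * d) : y ≤ gfun amax mu c d := by
  apply le_csInf (gfun_set_nonempty hg d)
  rintro z ⟨a, ha, rfl⟩
  exact h a ha

lemma gfun_of_nonneg (hg : GH amax mu c) {d : ℝ} (hd : 0 ≤ d) : gfun amax mu c d = 0 := by
  apply le_antisymm
  · have h := gfun_le hg (Set.left_mem_Icc.2 hg.h0) d
    rw [hg.hc0, hg.hm0] at h; linarith
  · apply le_gfun hg
    intro a ha
    have := hg.c_nonneg ha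
    have := mul_nonneg (hg.mu_nonneg ha) hd
    linarith

lemma gfun_mono (hg : GH amax mu c) {d e : ℝ} (h : d ≤ e) :
    gfun amax mu c d ≤ gfun amax mu c e := by
  apply le_gfun hg
  intro a ha
  have h1 := gfun_le hg ha d
  have h2 : mu a * d ≤ mu a * e := mul_le_mul_of_nonneg_left h (hg.mu_nonneg ha)
  linarith

lemma gfun_nonpos (hg : GH amax mu c) (d : ℝ) : gfun amax mu c d ≤ 0 := by
  rcases le_or_gt 0 d with h | h
  · exact le_of_eq (gfun_of_nonneg hg h)
  · calc gfun amax mu c d ≤ gfun amax mu c 0 := gfun_mono hg h.le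
      _ = 0 := gfun_of_nonneg hg le_rfl

lemma gfun_lip (hg : GH amax mu c) {s t : ℝ} (h : s ≤ t) :
    gfun amax mu c t ≤ gfun amax mu c s + mu amax * (t - s) := by
  have key : gfun amax mu c t - mu amax * (t - s) ≤ gfun amax mu c s := by
    apply le_gfun hg
    intro a ha
    have l := gfun_le hg ha t
    have hb : mu a * (t - s) ≤ mu amax * (t - s) :=
      mul_le_mul_of_nonneg_right (hg.mu_le_max ha) (by linarith)
    nlinarith
  linarith

lemma gfun_chord (hg : GH amax mu c) {p q x : ℝ} (hpq : p < q) (h1 : p ≤ x) (h2 : x ≤ q) :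
    (q - x) * gfun amax mu c p + (x - p) * gfun amax mu c q ≤ (q - p) * gfun amax mu c x := by
  have hq : 0 < q - p := by linarith
  have key : ((q - x) * gfun amax mu c p + (x - p) * gfun amax mu c q) / (q - p)
      ≤ gfun amax mu c x := by
    apply le_gfun hg
    intro a ha
    rw [div_le_iff₀ hq]
    have l1 := mul_le_mul_of_nonneg_left (gfun_le hg ha p) (by linarith : (0:ℝ) ≤ q - x)
    have l2 := mul_le_mul_of_nonneg_left (gfun_le hg ha q) (by linarith : (0:ℝ) ≤ x - p)
    nlinarith
  rw [div_le_iff₀ hq] at key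
  nlinarith [key]

lemma G2 (hg : GH amax mu c) (S a p : ℝ) (h1 : 0 ≤ S) (h2 : 0 ≤ S + (a - p)) :
    0 ≤ mu amax * S + (gfun amax mu c a - gfun amax mu c p) := by
  have hmu := hg.mumax_nonneg
  rcases le_or_gt p a with h | h
  · have := gfun_mono hg h
    have := mul_nonneg hmu h1
    linarith
  · have hl := gfun_lip hg h.le
    have := mul_nonneg hmu h2
    nlinarith

lemma G4conc (hg : GH amax mu c) (S a b p q : ℝ)
    (hpa : p ≤ a) (haq : a ≤ q) (hpb : p ≤ b) (hbq : b ≤ q)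
    (h1 : 0 ≤ S) (h2 : 0 ≤ S + (a + b - p - q)) :
    0 ≤ mu amax * S +
      (gfun amax mu c a + gfun amax mu c b - gfun amax mu c p - gfun amax mu c q) := by
  have hmu := hg.mumax_nonneg
  have hpq : p ≤ q := le_trans hpa haq
  rcases eq_or_lt_of_le hpq with heq | hlt
  · subst heq
    have e1 : a = p := le_antisymm haq hpa
    have e2 : b = p := le_antisymm hbq hpb
    subst e1; subst e2
    have := mul_nonneg hmu h1
    linarith
  · have ch1 := gfun_chord hg hlt hpa haq
    have ch2 := gfun_chord hg hlt hpb hbq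
    have ht0 : gfun amax mu c p ≤ gfun amax mu c q := gfun_mono hg hpq
    have ht1 := gfun_lip hg hpq
    have key : (a + b - p - q) * (gfun amax mu c q - gfun amax mu c p)
        ≤ (q - p) * (gfun amax mu c a + gfun amax mu c b
            - gfun amax mu c p - gfun amax mu c q) := by nlinarith [ch1, ch2]
    rcases le_or_gt 0 (a + b - p - q) with hs | hs
    · have h5 : 0 ≤ (a + b - p - q) * (gfun amax mu c q - gfun amax mu c p) :=
        mul_nonneg hs (by linarith)
      have h6 : (q - p) * 0 ≤ (q - p) * (gfun amax mu c a + gfun amax mu c b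
          - gfun amax mu c p - gfun amax mu c q) := by nlinarith
      have h7 := le_of_mul_le_mul_left h6 (by linarith : (0:ℝ) < q - p)
      have := mul_nonneg hmu h1
      linarith
    · have h5 : (a + b - p - q) * (mu amax * (q - p))
          ≤ (a + b - p - q) * (gfun amax mu c q - gfun amax mu c p) :=
        mul_le_mul_of_nonpos_left (by linarith) hs.le
      have h6 : (q - p) * (mu amax * (a + b - p - q)) ≤ (q - p) *
          (gfun amax mu c a + gfun amax mu c b - gfun amax mu c p - gfun amax mu c q) := by
        nlinarith
      have h7 := le_of_mul_le_mul_left h6 (by linarith : (0:ℝ) < q - p)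
      have := mul_nonneg hmu h2
      nlinarith

lemma G4 (hg : GH amax mu c) (S a b p q : ℝ) (h1 : 0 ≤ S)
    (h2 : 0 ≤ S + (a + b - p - q)) (h3 : 0 ≤ S + (a - p)) (h4 : 0 ≤ S + (b - p)) :
    0 ≤ mu amax * S +
      (gfun amax mu c a + gfun amax mu c b - gfun amax mu c p - gfun amax mu c q) := by
  have hmu := hg.mumax_nonneg
  rcases le_or_gt p a with hpa | hap
  · rcases le_or_gt p b with hpb | hbp
    · rcases le_or_gt q b with hqb | hbq
      · have g1 := gfun_mono hg hpa
        have g2 := gfun_mono hg hqb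
        have := mul_nonneg hmu h1
        linarith
      · rcases le_or_gt q a with hqa | haq
        · have g1 := gfun_mono hg hqa
          have g2 := gfun_mono hg hpb
          have := mul_nonneg hmu h1
          linarith
        · exact G4conc hg S a b p q hpa haq.le hpb hbq.le h1 h2
    · have gb := gfun_lip hg hbp.le
      rcases le_or_gt q a with hqa | haq
      · have ga := gfun_mono hg hqa
        have := mul_nonneg hmu h4
        nlinarith
      · have ga := gfun_lip hg haq.le
        have := mul_nonneg hmu h2
        nlinarith
  · have ga := gfun_lip hg hap.le
    rcases le_or_gt q b with hqb | hbq
    · have gb := gfun_mono hg hqb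
      have := mul_nonneg hmu h3
      nlinarith
    · have gb := gfun_lip hg hbq.le
      have := mul_nonneg hmu h2
      nlinarith

lemma sInf_const_add (C : ℝ) {S : Set ℝ} (h1 : S.Nonempty) (h2 : BddBelow S) :
    sInf ((fun y => C + y) '' S) = C + sInf S := by
  apply le_antisymm
  · have key : sInf ((fun y => C + y) '' S) - C ≤ sInf S := by
      apply le_csInf h1
      intro y hy
      have hb : BddBelow ((fun y => C + y) '' S) := by
        obtain ⟨b, hb⟩ := h2
        exact ⟨C + b, by rintro z ⟨w, hw, rfl⟩; have := hb hw; simpa using by linarith⟩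
      have := csInf_le hb (⟨y, hy, rfl⟩ : C + y ∈ (fun y => C + y) '' S)
      linarith
    linarith
  · apply le_csInf (h1.image _)
    rintro z ⟨y, hy, rfl⟩
    have := csInf_le h2 hy
    simp only []
    linarith

lemma T1_eq (hg : GH amax mu c) (v : ℕ × ℕ → ℝ) (x : ℕ × ℕ) :
    T1 amax mu c v x = mu amax * v x + gfun amax mu c (v (D1 x) - v x) := by
  have hfe : (fun a => mu a * v (D1 x) + (mu amax - mu a) * v x + c a)
      = (fun y => mu amax * v x + y) ∘ (fun a => c a + mu a * (v (D1 x) - v x)) := by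
    funext a; simp only [Function.comp]; ring
  rw [T1, hfe, Set.image_comp,
    sInf_const_add _ (gfun_set_nonempty hg _) (gfun_bddBelow hg _)]
  rfl

lemma T2_eq (hg : GH amax mu c) (v : ℕ × ℕ → ℝ) (x : ℕ × ℕ) :
    T2 amax mu c v x = mu amax * v x + gfun amax mu c (v (D2 x) - v x) := by
  have hfe : (fun a => mu a * v (D2 x) + (mu amax - mu a) * v x + c a)
      = (fun y => mu amax * v x + y) ∘ (fun a => c a + mu a * (v (D2 x) - v x)) := by
    funext a; simp only [Function.comp]; ring
  rw [T2, hfe, Set.image_comp,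
    sInf_const_add _ (gfun_set_nonempty hg _) (gfun_bddBelow hg _)]
  rfl


structure Good (v : ℕ × ℕ → ℝ) : Prop where
  m   : ∀ i k : ℕ, v (i,k) ≤ v (i,k+1)
  m1  : ∀ i k : ℕ, v (i,k) ≤ v (i+1,k)
  s   : ∀ i k : ℕ, v (i,k+1) + v (i+1,k+1) ≤ v (i,k+1+1) + v (i+1,k)
  sup : ∀ i k : ℕ, v (i+1,k) + v (i,k+1) ≤ v (i+1,k+1) + v (i,k)
  x   : ∀ i k : ℕ, v (i+1,k) + v (i+1,k+1) ≤ v (i+1+1,k) + v (i,k+1)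

lemma Good.c2 {v : ℕ × ℕ → ℝ} (hv : Good v) (i k : ℕ) :
    v (i,k+1) + v (i,k+1) ≤ v (i,k+1+1) + v (i,k) := by
  linarith [hv.s i k, hv.sup i k]

lemma Good.c1 {v : ℕ × ℕ → ℝ} (hv : Good v) (i k : ℕ) :
    v (i+1,k) + v (i+1,k) ≤ v (i+1+1,k) + v (i,k) := by
  linarith [hv.x i k, hv.sup i k]

lemma Good.convf {v : ℕ × ℕ → ℝ} (hv : Good v) (i k : ℕ) :
    v (i+1,k+1) + v (i+1,k+1) ≤ v (i,k+1+1) + v (i+1+1,k) := by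
  linarith [hv.s i k, hv.x i k]

lemma good_T1 (hg : GH amax mu c) {v : ℕ × ℕ → ℝ} (hv : Good v) :
    Good (T1 amax mu c v) := by
  have hT : ∀ x, T1 amax mu c v x = mu amax * v x + gfun amax mu c (v (D1 x) - v x) :=
    T1_eq hg v
  have hg0 : gfun amax mu c 0 = 0 := gfun_of_nonneg hg le_rfl
  have hmu : 0 ≤ mu amax := hg.mumax_nonneg
  constructor
  · -- m
    intro i k
    rcases i with _ | j
    · simp only [hT, D1_zero, sub_self, hg0, add_zero]
      have := mul_le_mul_of_nonneg_left (hv.m 0 k) hmu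
      linarith
    · simp only [hT, D1_succ]
      have H := G2 hg (v (j+1, k+1) - v (j+1, k))
        (v (j, k+1+1) - v (j+1, k+1)) (v (j, k+1) - v (j+1, k))
        (by linarith [hv.m (j+1) k]) (by linarith [hv.m j (k+1)])
      linarith
  · -- m1
    intro i k
    rcases i with _ | j
    · simp only [hT, D1_succ, D1_zero, sub_self, hg0, add_zero]
      have H := G2 hg (v (0+1, k) - v (0, k))
        (v (0, k+1) - v (0+1, k)) 0
        (by linarith [hv.m1 0 k]) (by linarith [hv.m 0 k])
      linarith [hg0]
    · simp only [hT, D1_succ]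
      have H := G2 hg (v (j+1+1, k) - v (j+1, k))
        (v (j+1, k+1) - v (j+1+1, k)) (v (j, k+1) - v (j+1, k))
        (by linarith [hv.m1 (j+1) k]) (by linarith [hv.m1 j (k+1)])
      linarith
  · -- s
    intro i k
    rcases i with _ | j
    · simp only [hT, D1_succ, D1_zero, sub_self, hg0, add_zero]
      have H := G2 hg
        (v (0, k+1+1) + v (0+1, k) - (v (0, k+1) + v (0+1, k+1)))
        (v (0, k+1) - v (0+1, k)) (v (0, k+1+1) - v (0+1, k+1))
        (by linarith [hv.s 0 k]) (by linarith)
      linarith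
    · simp only [hT, D1_succ]
      have H := G4 hg
        (v (j+1, k+1+1) + v (j+1+1, k) - (v (j+1, k+1) + v (j+1+1, k+1)))
        (v (j, k+1+1+1) - v (j+1, k+1+1)) (v (j+1, k+1) - v (j+1+1, k))
        (v (j+1, k+1+1) - v (j+1+1, k+1)) (v (j, k+1+1) - v (j+1, k+1))
        (by linarith [hv.s (j+1) k])
        (by linarith [hv.s j (k+1)])
        (by linarith [hv.s j (k+1), hv.s j k, hv.x j k])
        (by linarith)
      linarith
  · -- sup
    intro i k
    rcases i with _ | j
    · simp only [hT, D1_succ, D1_zero, sub_self, hg0, add_zero]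
      have H := G2 hg
        (v (0+1, k+1) + v (0, k) - (v (0+1, k) + v (0, k+1)))
        (v (0, k+1+1) - v (0+1, k+1)) (v (0, k+1) - v (0+1, k))
        (by linarith [hv.sup 0 k]) (by linarith [hv.s 0 k, hv.sup 0 k])
      linarith
    · simp only [hT, D1_succ]
      have H := G4 hg
        (v (j+1+1, k+1) + v (j+1, k) - (v (j+1+1, k) + v (j+1, k+1)))
        (v (j+1, k+1+1) - v (j+1+1, k+1)) (v (j, k+1) - v (j+1, k))
        (v (j+1, k+1) - v (j+1+1, k)) (v (j, k+1+1) - v (j+1, k+1))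
        (by linarith [hv.sup (j+1) k])
        (by linarith [hv.sup j (k+1)])
        (by linarith [hv.s (j+1) k, hv.sup (j+1) k])
        (by linarith [hv.x j (k+1), hv.sup j (k+1)])
      linarith
  · -- x
    intro i k
    rcases i with _ | j
    · simp only [hT, D1_succ, D1_zero, sub_self, hg0, add_zero]
      have H := G2 hg
        (v (0+1+1, k) + v (0, k+1) - (v (0+1, k) + v (0+1, k+1)))
        (v (0+1, k+1) - v (0+1+1, k)) (v (0, k+1) - v (0+1, k))
        (by linarith [hv.x 0 k]) (by linarith)
      linarith [gfun_nonpos hg (v (0, k+1+1) - v (0+1, k+1))]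
    · simp only [hT, D1_succ]
      have H := G4 hg
        (v (j+1+1+1, k) + v (j+1, k+1) - (v (j+1+1, k) + v (j+1+1, k+1)))
        (v (j+1+1, k+1) - v (j+1+1+1, k)) (v (j, k+1+1) - v (j+1, k+1))
        (v (j+1, k+1) - v (j+1+1, k)) (v (j+1, k+1+1) - v (j+1+1, k+1))
        (by linarith [hv.x (j+1) k])
        (by linarith [hv.x j (k+1)])
        (by linarith)
        (by linarith [hv.x (j+1) k, hv.s j k, hv.x j k])
      linarith

lemma good_T2 (hg : GH amax mu c) {v : ℕ × ℕ → ℝ} (hv : Good v) :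
    Good (T2 amax mu c v) := by
  have hT : ∀ x, T2 amax mu c v x = mu amax * v x + gfun amax mu c (v (D2 x) - v x) :=
    T2_eq hg v
  have hg0 : gfun amax mu c 0 = 0 := gfun_of_nonneg hg le_rfl
  have hmu : 0 ≤ mu amax := hg.mumax_nonneg
  constructor
  · -- m
    intro i k
    rcases k with _ | j
    · simp only [hT, D2_succ, D2_zero, sub_self, hg0, add_zero]
      have H := G2 hg (v (i, 0+1) - v (i, 0))
        (v (i, 0) - v (i, 0+1)) 0
        (by linarith [hv.m i 0]) (by linarith)
      linarith [hg0]
    · simp only [hT, D2_succ]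
      have H := G2 hg (v (i, j+1+1) - v (i, j+1))
        (v (i, j+1) - v (i, j+1+1)) (v (i, j) - v (i, j+1))
        (by linarith [hv.m i (j+1)]) (by linarith [hv.m i j])
      linarith
  · -- m1
    intro i k
    rcases k with _ | j
    · simp only [hT, D2_zero, sub_self, hg0, add_zero]
      have := mul_le_mul_of_nonneg_left (hv.m1 i 0) hmu
      linarith
    · simp only [hT, D2_succ]
      have H := G2 hg (v (i+1, j+1) - v (i, j+1))
        (v (i+1, j) - v (i+1, j+1)) (v (i, j) - v (i, j+1))
        (by linarith [hv.m1 i (j+1)]) (by linarith [hv.m1 i j])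
      linarith
  · -- s
    intro i k
    rcases k with _ | j
    · simp only [hT, D2_succ, D2_zero, sub_self, hg0, add_zero]
      have H := G2 hg
        (v (i, 0+1+1) + v (i+1, 0) - (v (i, 0+1) + v (i+1, 0+1)))
        (v (i, 0+1) - v (i, 0+1+1)) (v (i+1, 0) - v (i+1, 0+1))
        (by linarith [hv.s i 0]) (by linarith)
      linarith [gfun_nonpos hg (v (i, 0) - v (i, 0+1))]
    · simp only [hT, D2_succ]
      have H := G4 hg
        (v (i, j+1+1+1) + v (i+1, j+1) - (v (i, j+1+1) + v (i+1, j+1+1)))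
        (v (i, j+1+1) - v (i, j+1+1+1)) (v (i+1, j) - v (i+1, j+1))
        (v (i+1, j+1) - v (i+1, j+1+1)) (v (i, j+1) - v (i, j+1+1))
        (by linarith [hv.s i (j+1)])
        (by linarith [hv.s i j])
        (by linarith)
        (by linarith [hv.s i (j+1), hv.s (i+1) j, hv.sup (i+1) j])
      linarith
  · -- sup
    intro i k
    rcases k with _ | j
    · simp only [hT, D2_succ, D2_zero, sub_self, hg0, add_zero]
      have H := G2 hg
        (v (i+1, 0+1) + v (i, 0) - (v (i+1, 0) + v (i, 0+1)))
        (v (i+1, 0) - v (i+1, 0+1)) (v (i, 0) - v (i, 0+1))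
        (by linarith [hv.sup i 0]) (by linarith)
      linarith
    · simp only [hT, D2_succ]
      have H := G4 hg
        (v (i+1, j+1+1) + v (i, j+1) - (v (i+1, j+1) + v (i, j+1+1)))
        (v (i+1, j+1) - v (i+1, j+1+1)) (v (i, j) - v (i, j+1))
        (v (i, j+1) - v (i, j+1+1)) (v (i+1, j) - v (i+1, j+1))
        (by linarith [hv.sup i (j+1)])
        (by linarith [hv.sup i j])
        (by linarith)
        (by linarith [hv.sup i (j+1), hv.s i j, hv.sup i j])
      linarith
  · -- x
    intro i k
    rcases k with _ | j
    · simp only [hT, D2_succ, D2_zero, sub_self, hg0, add_zero]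
      have H := G2 hg
        (v (i+1+1, 0) + v (i, 0+1) - (v (i+1, 0) + v (i+1, 0+1)))
        (v (i, 0) - v (i, 0+1)) (v (i+1, 0) - v (i+1, 0+1))
        (by linarith [hv.x i 0]) (by linarith [hv.x i 0, hv.sup i 0])
      linarith
    · simp only [hT, D2_succ]
      have H := G4 hg
        (v (i+1+1, j+1) + v (i, j+1+1) - (v (i+1, j+1) + v (i+1, j+1+1)))
        (v (i+1+1, j) - v (i+1+1, j+1)) (v (i, j+1) - v (i, j+1+1))
        (v (i+1, j+1) - v (i+1, j+1+1)) (v (i+1, j) - v (i+1, j+1))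
        (by linarith [hv.x i (j+1)])
        (by linarith [hv.x i j])
        (by linarith [hv.s i j, hv.x i j])
        (by linarith [hv.x i (j+1), hv.sup i (j+1)])
      linarith


lemma good_T {lam amax bmax h1 h2 : ℝ} {mu1 mu2 c1 c2 : ℝ → ℝ}
    (hg1 : GH amax mu1 c1) (hg2 : GH bmax mu2 c2)
    (hlam : 0 ≤ lam) (hh1 : 0 ≤ h1) (hh2 : 0 ≤ h2)
    {v : ℕ × ℕ → ℝ} (hv : Good v) :
    Good (T lam amax bmax h1 h2 mu1 mu2 c1 c2 v) := by
  have H1 := good_T1 hg1 hv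
  have H2 := good_T2 hg2 hv
  have e : ∀ i k : ℕ, T lam amax bmax h1 h2 mu1 mu2 c1 c2 v (i, k) =
      lam * v (i+1, k) + T1 amax mu1 c1 v (i,k) + T2 bmax mu2 c2 v (i,k) +
      h1 * (i : ℝ) + h2 * (k : ℝ) := fun i k => rfl
  constructor
  · intro i k
    rw [e, e]
    push_cast
    have hl := mul_le_mul_of_nonneg_left (hv.m (i+1) k) hlam
    have hh := mul_le_mul_of_nonneg_left (show (k:ℝ) ≤ (k:ℝ)+1 by linarith) hh2
    linarith [H1.m i k, H2.m i k]
  · intro i k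
    rw [e, e]
    push_cast
    have hl := mul_le_mul_of_nonneg_left (hv.m1 (i+1) k) hlam
    have hh := mul_le_mul_of_nonneg_left (show (i:ℝ) ≤ (i:ℝ)+1 by linarith) hh1
    linarith [H1.m1 i k, H2.m1 i k]
  · intro i k
    rw [e, e, e, e]
    push_cast
    have hl := mul_le_mul_of_nonneg_left (hv.s (i+1) k) hlam
    linarith [H1.s i k, H2.s i k]
  · intro i k
    rw [e, e, e, e]
    push_cast
    have hl := mul_le_mul_of_nonneg_left (hv.sup (i+1) k) hlam
    linarith [H1.sup i k, H2.sup i k]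
  · intro i k
    rw [e, e, e, e]
    push_cast
    have hl := mul_le_mul_of_nonneg_left (hv.x (i+1) k) hlam
    linarith [H1.x i k, H2.x i k]



lemma good_vIter {lam amax bmax h1 h2 : ℝ} {mu1 mu2 c1 c2 : ℝ → ℝ}
    (hg1 : GH amax mu1 c1) (hg2 : GH bmax mu2 c2)
    (hlam : 0 ≤ lam) (hh1 : 0 ≤ h1) (hh2 : 0 ≤ h2) :
    ∀ n : ℕ, Good (vIter lam amax bmax h1 h2 mu1 mu2 c1 c2 n) := by
  intro n
  induction n with
  | zero =>
    exact ⟨fun _ _ => le_rfl, fun _ _ => le_rfl, fun _ _ => le_rfl,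
      fun _ _ => le_rfl, fun _ _ => le_rfl⟩
  | succ n ih => exact good_T hg1 hg2 hlam hh1 hh2 ih

end Tandem

theorem property_4_2_i
    (lam amax bmax h1 h2 : ℝ) (mu1 mu2 c1 c2 : ℝ → ℝ)
    (hlam : 0 < lam) (hamax : 0 < amax) (hbmax : 0 < bmax)
    (hmu1c : ContinuousOn mu1 (Icc 0 amax)) (hmu1m : StrictMonoOn mu1 (Icc 0 amax))
    (hmu2c : ContinuousOn mu2 (Icc 0 bmax)) (hmu2m : StrictMonoOn mu2 (Icc 0 bmax))
    (hc1c : ContinuousOn c1 (Icc 0 amax)) (hc1m : StrictMonoOn c1 (Icc 0 amax))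
    (hc2c : ContinuousOn c2 (Icc 0 bmax)) (hc2m : StrictMonoOn c2 (Icc 0 bmax))
    (hmu10 : mu1 0 = 0) (hmu20 : mu2 0 = 0) (hc10 : c1 0 = 0) (hc20 : c2 0 = 0)
    (hh1 : 0 ≤ h1) (hh2 : 0 ≤ h2)
    (huni : lam + mu1 amax + mu2 bmax = 1) :
    ∀ (n : ℕ) (x : ℕ × ℕ), 1 ≤ x.2 →
      vIter lam amax bmax h1 h2 mu1 mu2 c1 c2 n (x.1, x.2 + 1) - 2 * vIter lam amax bmax h1 h2 mu1 mu2 c1 c2 n x + vIter lam amax bmax h1 h2 mu1 mu2 c1 c2 n (x.1, x.2 - 1) ≥ 0 := by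
  intro n x hx
  have hg1 : Tandem.GH amax mu1 c1 := ⟨hamax.le, hmu1m, hc1m, hmu10, hc10⟩
  have hg2 : Tandem.GH bmax mu2 c2 := ⟨hbmax.le, hmu2m, hc2m, hmu20, hc20⟩
  have hG := Tandem.good_vIter hg1 hg2 hlam.le hh1 hh2 n
  obtain ⟨i, k⟩ := x
  simp only at hx
  obtain ⟨j, rfl⟩ : ∃ j, k = j + 1 := ⟨k - 1, by omega⟩
  have h := hG.c2 i j
  show vIter lam amax bmax h1 h2 mu1 mu2 c1 c2 n (i, j+1+1)
      - 2 * vIter lam amax bmax h1 h2 mu1 mu2 c1 c2 n (i, j+1)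
      + vIter lam amax bmax h1 h2 mu1 mu2 c1 c2 n (i, j) ≥ 0
  linarith [h]
end

section
/- For every n ∈ ℕ and every x = (x₁, x₂) ∈ E with x₁ ≥ 1 and x₂ ≥ 1, the value-iteration function is convex along the direction e₁ − e₂: v_n(x + e₁ − e₂) − 2 v_n(x) + v_n(x − e₁ + e₂) ≥ 0. (Property 4.2(ii).) -/
open Set

/-! ### Auxiliary structural properties -/

/-- `Δv` (increment along `e₁ - e₂`) is nonincreasing in the second coordinate
(equivalently, superconvexity `SuperC(2,1)`). -/
def IsP2 (v : ℕ × ℕ → ℝ) : Prop :=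
  ∀ i j : ℕ, v (i+1, j+1) + v (i, j+1) ≤ v (i+1, j) + v (i, j+2)

/-- `Δv` is nondecreasing in the first coordinate (superconvexity `SuperC(1,2)`). -/
def IsP3 (v : ℕ × ℕ → ℝ) : Prop :=
  ∀ i j : ℕ, v (i+1, j+1) + v (i+1, j) ≤ v (i+2, j) + v (i, j+1)

/-- Supermodularity. -/
def IsP4 (v : ℕ × ℕ → ℝ) : Prop :=
  ∀ i j : ℕ, v (i+1, j) + v (i, j+1) ≤ v (i+1, j+1) + v (i, j)

lemma op_attains {m : ℝ} (hm : 0 < m) {mu c : ℝ → ℝ}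
    (hmuc : ContinuousOn mu (Icc 0 m)) (hcc : ContinuousOn c (Icc 0 m)) (A B : ℝ) :
    ∃ a ∈ Icc (0:ℝ) m,
      sInf ((fun t => mu t * A + (mu m - mu t) * B + c t) '' Icc 0 m)
        = mu a * A + (mu m - mu a) * B + c a := by
  have hcont : ContinuousOn (fun t => mu t * A + (mu m - mu t) * B + c t) (Icc 0 m) :=
    ((hmuc.mul continuousOn_const).add
      ((continuousOn_const.sub hmuc).mul continuousOn_const)).add hcc
  obtain ⟨a, ha, hmin⟩ := isCompact_Icc.exists_isMinOn (nonempty_Icc.2 hm.le) hcont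
  refine ⟨a, ha, le_antisymm
      (csInf_le ((isCompact_Icc.image_of_continuousOn hcont).bddBelow) ⟨a, ha, rfl⟩)
      (le_csInf ⟨_, ⟨a, ha, rfl⟩⟩ ?_)⟩
  rintro z ⟨b, hb, rfl⟩
  exact isMinOn_iff.mp hmin b hb

lemma op_le {m : ℝ} {mu c : ℝ → ℝ}
    (hmuc : ContinuousOn mu (Icc 0 m)) (hcc : ContinuousOn c (Icc 0 m)) (A B : ℝ)
    {b : ℝ} (hb : b ∈ Icc (0:ℝ) m) :
    sInf ((fun t => mu t * A + (mu m - mu t) * B + c t) '' Icc 0 m)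
      ≤ mu b * A + (mu m - mu b) * B + c b := by
  have hcont : ContinuousOn (fun t => mu t * A + (mu m - mu t) * B + c t) (Icc 0 m) :=
    ((hmuc.mul continuousOn_const).add
      ((continuousOn_const.sub hmuc).mul continuousOn_const)).add hcc
  exact csInf_le ((isCompact_Icc.image_of_continuousOn hcont).bddBelow) ⟨b, hb, rfl⟩

section Preserve

variable {amax : ℝ} {mu1 c1 : ℝ → ℝ} (hamax : 0 < amax)
variable (hmu1c : ContinuousOn mu1 (Icc 0 amax)) (hmu1m : StrictMonoOn mu1 (Icc 0 amax))
variable (hc1c : ContinuousOn c1 (Icc 0 amax)) (hc1m : StrictMonoOn c1 (Icc 0 amax))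
variable (hmu10 : mu1 0 = 0) (hc10 : c1 0 = 0)
variable (v : ℕ × ℕ → ℝ)

include hamax hmu1c hmu1m hc1c hc1m hmu10 hc10

lemma T1_P2 (h2 : IsP2 v) :
    ∀ i j : ℕ, T1 amax mu1 c1 v (i+1, j+1) + T1 amax mu1 c1 v (i, j+1)
      ≤ T1 amax mu1 c1 v (i+1, j) + T1 amax mu1 c1 v (i, j+2) := by
  have h0mem : (0:ℝ) ∈ Icc (0:ℝ) amax := ⟨le_rfl, hamax.le⟩
  have hmaxmem : amax ∈ Icc (0:ℝ) amax := ⟨hamax.le, le_rfl⟩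
  have hmu_le : ∀ {a : ℝ}, a ∈ Icc (0:ℝ) amax → mu1 a ≤ mu1 amax :=
    fun ha => hmu1m.monotoneOn ha hmaxmem ha.2
  have hc_nonneg : ∀ {a : ℝ}, a ∈ Icc (0:ℝ) amax → 0 ≤ c1 a :=
    fun ha => hc10 ▸ hc1m.monotoneOn h0mem ha ha.1
  have hmu_nonneg : ∀ {a : ℝ}, a ∈ Icc (0:ℝ) amax → 0 ≤ mu1 a :=
    fun ha => hmu10 ▸ hmu1m.monotoneOn h0mem ha ha.1
  intro i j
  rcases i with _ | k
  · show T1 amax mu1 c1 v (1, j+1) + T1 amax mu1 c1 v (0, j+1)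
      ≤ T1 amax mu1 c1 v (1, j) + T1 amax mu1 c1 v (0, j+2)
    obtain ⟨ap, hap, e1⟩ := op_attains hamax hmu1c hc1c (v (D1 (1, j))) (v (1, j))
    obtain ⟨a0, ha0, e2⟩ := op_attains hamax hmu1c hc1c (v (D1 (0, j+2))) (v (0, j+2))
    have e1' : T1 amax mu1 c1 v (1, j)
        = mu1 ap * v (D1 (1,j)) + (mu1 amax - mu1 ap) * v (1,j) + c1 ap := e1
    have e2' : T1 amax mu1 c1 v (0, j+2)
        = mu1 a0 * v (D1 (0,j+2)) + (mu1 amax - mu1 a0) * v (0,j+2) + c1 a0 := e2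
    have u1 : T1 amax mu1 c1 v (1, j+1)
        ≤ mu1 ap * v (D1 (1,j+1)) + (mu1 amax - mu1 ap) * v (1,j+1) + c1 ap :=
      op_le hmu1c hc1c _ _ hap
    have u2 : T1 amax mu1 c1 v (0, j+1)
        ≤ mu1 0 * v (D1 (0,j+1)) + (mu1 amax - mu1 0) * v (0,j+1) + c1 0 :=
      op_le hmu1c hc1c _ _ h0mem
    rw [show D1 (1,j) = (0,j+1) by simp [D1]] at e1'
    rw [show D1 (0,j+2) = (0,j+2) by simp [D1]] at e2'
    rw [show D1 (1,j+1) = (0,j+2) by simp [D1]] at u1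
    rw [hmu10, hc10, show D1 (0,j+1) = (0,j+1) by simp [D1]] at u2
    have prod1 : 0 ≤ (mu1 amax - mu1 ap) * (v (1,j) + v (0,j+2) - v (1,j+1) - v (0,j+1)) :=
      mul_nonneg (by linarith [hmu_le hap]) (by linarith [h2 0 j])
    have hcp : 0 ≤ c1 a0 := hc_nonneg ha0
    linarith
  · show T1 amax mu1 c1 v (k+2, j+1) + T1 amax mu1 c1 v (k+1, j+1)
      ≤ T1 amax mu1 c1 v (k+2, j) + T1 amax mu1 c1 v (k+1, j+2)
    obtain ⟨ap, hap, e1⟩ := op_attains hamax hmu1c hc1c (v (D1 (k+2, j))) (v (k+2, j))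
    obtain ⟨a0, ha0, e2⟩ := op_attains hamax hmu1c hc1c (v (D1 (k+1, j+2))) (v (k+1, j+2))
    have e1' : T1 amax mu1 c1 v (k+2, j)
        = mu1 ap * v (D1 (k+2,j)) + (mu1 amax - mu1 ap) * v (k+2,j) + c1 ap := e1
    have e2' : T1 amax mu1 c1 v (k+1, j+2)
        = mu1 a0 * v (D1 (k+1,j+2)) + (mu1 amax - mu1 a0) * v (k+1,j+2) + c1 a0 := e2
    have u1 : T1 amax mu1 c1 v (k+2, j+1)
        ≤ mu1 ap * v (D1 (k+2,j+1)) + (mu1 amax - mu1 ap) * v (k+2,j+1) + c1 ap :=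
      op_le hmu1c hc1c _ _ hap
    have u2 : T1 amax mu1 c1 v (k+1, j+1)
        ≤ mu1 a0 * v (D1 (k+1,j+1)) + (mu1 amax - mu1 a0) * v (k+1,j+1) + c1 a0 :=
      op_le hmu1c hc1c _ _ ha0
    rw [show D1 (k+2,j) = (k+1,j+1) by simp [D1]] at e1'
    rw [show D1 (k+1,j+2) = (k,j+3) by simp [D1]] at e2'
    rw [show D1 (k+2,j+1) = (k+1,j+2) by simp [D1]] at u1
    rw [show D1 (k+1,j+1) = (k,j+2) by simp [D1]] at u2
    have prod1 : 0 ≤ mu1 a0 * (v (k+1,j+1) + v (k,j+3) - v (k+1,j+2) - v (k,j+2)) :=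
      mul_nonneg (hmu_nonneg ha0) (by linarith [h2 k (j+1)])
    have prod2 : 0 ≤ (mu1 amax - mu1 ap) * (v (k+2,j) + v (k+1,j+2) - v (k+2,j+1) - v (k+1,j+1)) :=
      mul_nonneg (by linarith [hmu_le hap]) (by linarith [h2 (k+1) j])
    linarith

lemma T1_P3 (h3 : IsP3 v) :
    ∀ i j : ℕ, T1 amax mu1 c1 v (i+1, j+1) + T1 amax mu1 c1 v (i+1, j)
      ≤ T1 amax mu1 c1 v (i+2, j) + T1 amax mu1 c1 v (i, j+1) := by
  have h0mem : (0:ℝ) ∈ Icc (0:ℝ) amax := ⟨le_rfl, hamax.le⟩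
  have hmaxmem : amax ∈ Icc (0:ℝ) amax := ⟨hamax.le, le_rfl⟩
  have hmu_le : ∀ {a : ℝ}, a ∈ Icc (0:ℝ) amax → mu1 a ≤ mu1 amax :=
    fun ha => hmu1m.monotoneOn ha hmaxmem ha.2
  have hc_nonneg : ∀ {a : ℝ}, a ∈ Icc (0:ℝ) amax → 0 ≤ c1 a :=
    fun ha => hc10 ▸ hc1m.monotoneOn h0mem ha ha.1
  have hmu_nonneg : ∀ {a : ℝ}, a ∈ Icc (0:ℝ) amax → 0 ≤ mu1 a :=
    fun ha => hmu10 ▸ hmu1m.monotoneOn h0mem ha ha.1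
  intro i j
  rcases i with _ | k
  · show T1 amax mu1 c1 v (1, j+1) + T1 amax mu1 c1 v (1, j)
      ≤ T1 amax mu1 c1 v (2, j) + T1 amax mu1 c1 v (0, j+1)
    obtain ⟨ap, hap, e1⟩ := op_attains hamax hmu1c hc1c (v (D1 (2, j))) (v (2, j))
    obtain ⟨a0, ha0, e2⟩ := op_attains hamax hmu1c hc1c (v (D1 (0, j+1))) (v (0, j+1))
    have e1' : T1 amax mu1 c1 v (2, j)
        = mu1 ap * v (D1 (2,j)) + (mu1 amax - mu1 ap) * v (2,j) + c1 ap := e1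
    have e2' : T1 amax mu1 c1 v (0, j+1)
        = mu1 a0 * v (D1 (0,j+1)) + (mu1 amax - mu1 a0) * v (0,j+1) + c1 a0 := e2
    have u1 : T1 amax mu1 c1 v (1, j+1)
        ≤ mu1 0 * v (D1 (1,j+1)) + (mu1 amax - mu1 0) * v (1,j+1) + c1 0 :=
      op_le hmu1c hc1c _ _ h0mem
    have u2 : T1 amax mu1 c1 v (1, j)
        ≤ mu1 ap * v (D1 (1,j)) + (mu1 amax - mu1 ap) * v (1,j) + c1 ap :=
      op_le hmu1c hc1c _ _ hap
    rw [show D1 (2,j) = (1,j+1) by simp [D1]] at e1'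
    rw [show D1 (0,j+1) = (0,j+1) by simp [D1]] at e2'
    rw [hmu10, hc10, show D1 (1,j+1) = (0,j+2) by simp [D1]] at u1
    rw [show D1 (1,j) = (0,j+1) by simp [D1]] at u2
    have prod1 : 0 ≤ (mu1 amax - mu1 ap) * (v (2,j) + v (0,j+1) - v (1,j+1) - v (1,j)) :=
      mul_nonneg (by linarith [hmu_le hap]) (by linarith [h3 0 j])
    have hcp : 0 ≤ c1 a0 := hc_nonneg ha0
    linarith
  · show T1 amax mu1 c1 v (k+2, j+1) + T1 amax mu1 c1 v (k+2, j)
      ≤ T1 amax mu1 c1 v (k+3, j) + T1 amax mu1 c1 v (k+1, j+1)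
    obtain ⟨ap, hap, e1⟩ := op_attains hamax hmu1c hc1c (v (D1 (k+3, j))) (v (k+3, j))
    obtain ⟨a0, ha0, e2⟩ := op_attains hamax hmu1c hc1c (v (D1 (k+1, j+1))) (v (k+1, j+1))
    have e1' : T1 amax mu1 c1 v (k+3, j)
        = mu1 ap * v (D1 (k+3,j)) + (mu1 amax - mu1 ap) * v (k+3,j) + c1 ap := e1
    have e2' : T1 amax mu1 c1 v (k+1, j+1)
        = mu1 a0 * v (D1 (k+1,j+1)) + (mu1 amax - mu1 a0) * v (k+1,j+1) + c1 a0 := e2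
    have u1 : T1 amax mu1 c1 v (k+2, j+1)
        ≤ mu1 a0 * v (D1 (k+2,j+1)) + (mu1 amax - mu1 a0) * v (k+2,j+1) + c1 a0 :=
      op_le hmu1c hc1c _ _ ha0
    have u2 : T1 amax mu1 c1 v (k+2, j)
        ≤ mu1 ap * v (D1 (k+2,j)) + (mu1 amax - mu1 ap) * v (k+2,j) + c1 ap :=
      op_le hmu1c hc1c _ _ hap
    rw [show D1 (k+3,j) = (k+2,j+1) by simp [D1]] at e1'
    rw [show D1 (k+1,j+1) = (k,j+2) by simp [D1]] at e2'
    rw [show D1 (k+2,j+1) = (k+1,j+2) by simp [D1]] at u1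
    rw [show D1 (k+2,j) = (k+1,j+1) by simp [D1]] at u2
    have prod1 : 0 ≤ (mu1 amax - mu1 ap) * (v (k+3,j) + v (k+1,j+1) - v (k+2,j+1) - v (k+2,j)) :=
      mul_nonneg (by linarith [hmu_le hap]) (by linarith [h3 (k+1) j])
    have prod2 : 0 ≤ mu1 a0 * (v (k+2,j+1) + v (k,j+2) - v (k+1,j+2) - v (k+1,j+1)) :=
      mul_nonneg (hmu_nonneg ha0) (by linarith [h3 k (j+1)])
    linarith

lemma T1_P4 (h2 : IsP2 v) (h3 : IsP3 v) (h4 : IsP4 v) :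
    ∀ i j : ℕ, T1 amax mu1 c1 v (i+1, j) + T1 amax mu1 c1 v (i, j+1)
      ≤ T1 amax mu1 c1 v (i+1, j+1) + T1 amax mu1 c1 v (i, j) := by
  have h0mem : (0:ℝ) ∈ Icc (0:ℝ) amax := ⟨le_rfl, hamax.le⟩
  have hmaxmem : amax ∈ Icc (0:ℝ) amax := ⟨hamax.le, le_rfl⟩
  have hmu_le : ∀ {a : ℝ}, a ∈ Icc (0:ℝ) amax → mu1 a ≤ mu1 amax :=
    fun ha => hmu1m.monotoneOn ha hmaxmem ha.2
  have hc_nonneg : ∀ {a : ℝ}, a ∈ Icc (0:ℝ) amax → 0 ≤ c1 a :=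
    fun ha => hc10 ▸ hc1m.monotoneOn h0mem ha ha.1
  have hmu_nonneg : ∀ {a : ℝ}, a ∈ Icc (0:ℝ) amax → 0 ≤ mu1 a :=
    fun ha => hmu10 ▸ hmu1m.monotoneOn h0mem ha ha.1
  intro i j
  rcases i with _ | k
  · show T1 amax mu1 c1 v (1, j) + T1 amax mu1 c1 v (0, j+1)
      ≤ T1 amax mu1 c1 v (1, j+1) + T1 amax mu1 c1 v (0, j)
    obtain ⟨ap, hap, e1⟩ := op_attains hamax hmu1c hc1c (v (D1 (1, j+1))) (v (1, j+1))
    obtain ⟨a0, ha0, e2⟩ := op_attains hamax hmu1c hc1c (v (D1 (0, j))) (v (0, j))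
    have e1' : T1 amax mu1 c1 v (1, j+1)
        = mu1 ap * v (D1 (1,j+1)) + (mu1 amax - mu1 ap) * v (1,j+1) + c1 ap := e1
    have e2' : T1 amax mu1 c1 v (0, j)
        = mu1 a0 * v (D1 (0,j)) + (mu1 amax - mu1 a0) * v (0,j) + c1 a0 := e2
    have u1 : T1 amax mu1 c1 v (1, j)
        ≤ mu1 ap * v (D1 (1,j)) + (mu1 amax - mu1 ap) * v (1,j) + c1 ap :=
      op_le hmu1c hc1c _ _ hap
    have u2 : T1 amax mu1 c1 v (0, j+1)
        ≤ mu1 0 * v (D1 (0,j+1)) + (mu1 amax - mu1 0) * v (0,j+1) + c1 0 :=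
      op_le hmu1c hc1c _ _ h0mem
    rw [show D1 (1,j+1) = (0,j+2) by simp [D1]] at e1'
    rw [show D1 (0,j) = (0,j) by simp [D1]] at e2'
    rw [show D1 (1,j) = (0,j+1) by simp [D1]] at u1
    rw [hmu10, hc10, show D1 (0,j+1) = (0,j+1) by simp [D1]] at u2
    have prod1 : 0 ≤ mu1 ap * (v (0,j+2) + v (1,j) - v (0,j+1) - v (1,j+1)) :=
      mul_nonneg (hmu_nonneg hap) (by linarith [h2 0 j])
    have prod2 : 0 ≤ mu1 amax * (v (1,j+1) + v (0,j) - v (1,j) - v (0,j+1)) :=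
      mul_nonneg (by linarith [hmu_nonneg hmaxmem, hmu_le hmaxmem]) (by linarith [h4 0 j])
    have hcp : 0 ≤ c1 a0 := hc_nonneg ha0
    linarith
  · show T1 amax mu1 c1 v (k+2, j) + T1 amax mu1 c1 v (k+1, j+1)
      ≤ T1 amax mu1 c1 v (k+2, j+1) + T1 amax mu1 c1 v (k+1, j)
    obtain ⟨ap, hap, e1⟩ := op_attains hamax hmu1c hc1c (v (D1 (k+2, j+1))) (v (k+2, j+1))
    obtain ⟨a0, ha0, e2⟩ := op_attains hamax hmu1c hc1c (v (D1 (k+1, j))) (v (k+1, j))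
    have e1' : T1 amax mu1 c1 v (k+2, j+1)
        = mu1 ap * v (D1 (k+2,j+1)) + (mu1 amax - mu1 ap) * v (k+2,j+1) + c1 ap := e1
    have e2' : T1 amax mu1 c1 v (k+1, j)
        = mu1 a0 * v (D1 (k+1,j)) + (mu1 amax - mu1 a0) * v (k+1,j) + c1 a0 := e2
    rw [show D1 (k+2,j+1) = (k+1,j+2) by simp [D1]] at e1'
    rw [show D1 (k+1,j) = (k,j+1) by simp [D1]] at e2'
    rcases le_total (mu1 a0) (mu1 ap) with hpq | hpq
    · -- assignment A: ap at (k+2,j), a0 at (k+1,j+1)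
      have u1 : T1 amax mu1 c1 v (k+2, j)
          ≤ mu1 ap * v (D1 (k+2,j)) + (mu1 amax - mu1 ap) * v (k+2,j) + c1 ap :=
        op_le hmu1c hc1c _ _ hap
      have u2 : T1 amax mu1 c1 v (k+1, j+1)
          ≤ mu1 a0 * v (D1 (k+1,j+1)) + (mu1 amax - mu1 a0) * v (k+1,j+1) + c1 a0 :=
        op_le hmu1c hc1c _ _ ha0
      rw [show D1 (k+2,j) = (k+1,j+1) by simp [D1]] at u1
      rw [show D1 (k+1,j+1) = (k,j+2) by simp [D1]] at u2
      have prod1 : 0 ≤ mu1 ap * (v (k+1,j+2) + v (k,j+1) - v (k+1,j+1) - v (k,j+2)) :=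
        mul_nonneg (hmu_nonneg hap) (by linarith [h4 k (j+1)])
      have prod2 : 0 ≤ (mu1 amax - mu1 ap) * (v (k+2,j+1) + v (k+1,j) - v (k+2,j) - v (k+1,j+1)) :=
        mul_nonneg (by linarith [hmu_le hap]) (by linarith [h4 (k+1) j])
      have prod3 : 0 ≤ (mu1 ap - mu1 a0) * (v (k+1,j) + v (k,j+2) - v (k+1,j+1) - v (k,j+1)) :=
        mul_nonneg (by linarith) (by linarith [h2 k j])
      linarith
    · -- assignment B: a0 at (k+2,j), ap at (k+1,j+1)
      have u1 : T1 amax mu1 c1 v (k+2, j)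
          ≤ mu1 a0 * v (D1 (k+2,j)) + (mu1 amax - mu1 a0) * v (k+2,j) + c1 a0 :=
        op_le hmu1c hc1c _ _ ha0
      have u2 : T1 amax mu1 c1 v (k+1, j+1)
          ≤ mu1 ap * v (D1 (k+1,j+1)) + (mu1 amax - mu1 ap) * v (k+1,j+1) + c1 ap :=
        op_le hmu1c hc1c _ _ hap
      rw [show D1 (k+2,j) = (k+1,j+1) by simp [D1]] at u1
      rw [show D1 (k+1,j+1) = (k,j+2) by simp [D1]] at u2
      have prod1 : 0 ≤ mu1 ap * (v (k+1,j+2) + v (k,j+1) - v (k+1,j+1) - v (k,j+2)) :=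
        mul_nonneg (hmu_nonneg hap) (by linarith [h4 k (j+1)])
      have prod2 : 0 ≤ (mu1 amax - mu1 ap) * (v (k+2,j+1) + v (k+1,j) - v (k+2,j) - v (k+1,j+1)) :=
        mul_nonneg (by linarith [hmu_le hap]) (by linarith [h4 (k+1) j])
      have prod3 : 0 ≤ (mu1 a0 - mu1 ap) * (v (k+2,j) + v (k,j+1) - v (k+1,j+1) - v (k+1,j)) :=
        mul_nonneg (by linarith) (by linarith [h3 k j])
      linarith

end Preserve

section Preserve2

variable {bmax : ℝ} {mu2 c2 : ℝ → ℝ} (hbmax : 0 < bmax)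
variable (hmu2c : ContinuousOn mu2 (Icc 0 bmax)) (hmu2m : StrictMonoOn mu2 (Icc 0 bmax))
variable (hc2c : ContinuousOn c2 (Icc 0 bmax)) (hc2m : StrictMonoOn c2 (Icc 0 bmax))
variable (hmu20 : mu2 0 = 0) (hc20 : c2 0 = 0)
variable (v : ℕ × ℕ → ℝ)

include hbmax hmu2c hmu2m hc2c hc2m hmu20 hc20

lemma T2_P2 (h2 : IsP2 v) :
    ∀ i j : ℕ, T2 bmax mu2 c2 v (i+1, j+1) + T2 bmax mu2 c2 v (i, j+1)
      ≤ T2 bmax mu2 c2 v (i+1, j) + T2 bmax mu2 c2 v (i, j+2) := by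
  have h0mem : (0:ℝ) ∈ Icc (0:ℝ) bmax := ⟨le_rfl, hbmax.le⟩
  have hmaxmem : bmax ∈ Icc (0:ℝ) bmax := ⟨hbmax.le, le_rfl⟩
  have hmu_le : ∀ {a : ℝ}, a ∈ Icc (0:ℝ) bmax → mu2 a ≤ mu2 bmax :=
    fun ha => hmu2m.monotoneOn ha hmaxmem ha.2
  have hc_nonneg : ∀ {a : ℝ}, a ∈ Icc (0:ℝ) bmax → 0 ≤ c2 a :=
    fun ha => hc20 ▸ hc2m.monotoneOn h0mem ha ha.1
  have hmu_nonneg : ∀ {a : ℝ}, a ∈ Icc (0:ℝ) bmax → 0 ≤ mu2 a :=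
    fun ha => hmu20 ▸ hmu2m.monotoneOn h0mem ha ha.1
  intro i j
  rcases j with _ | m
  · show T2 bmax mu2 c2 v (i+1, 1) + T2 bmax mu2 c2 v (i, 1)
      ≤ T2 bmax mu2 c2 v (i+1, 0) + T2 bmax mu2 c2 v (i, 2)
    obtain ⟨bp, hbp, e1⟩ := op_attains hbmax hmu2c hc2c (v (D2 (i+1, 0))) (v (i+1, 0))
    obtain ⟨b0, hb0, e2⟩ := op_attains hbmax hmu2c hc2c (v (D2 (i, 2))) (v (i, 2))
    have e1' : T2 bmax mu2 c2 v (i+1, 0)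
        = mu2 bp * v (D2 (i+1,0)) + (mu2 bmax - mu2 bp) * v (i+1,0) + c2 bp := e1
    have e2' : T2 bmax mu2 c2 v (i, 2)
        = mu2 b0 * v (D2 (i,2)) + (mu2 bmax - mu2 b0) * v (i,2) + c2 b0 := e2
    have u1 : T2 bmax mu2 c2 v (i+1, 1)
        ≤ mu2 b0 * v (D2 (i+1,1)) + (mu2 bmax - mu2 b0) * v (i+1,1) + c2 b0 :=
      op_le hmu2c hc2c _ _ hb0
    have u2 : T2 bmax mu2 c2 v (i, 1)
        ≤ mu2 0 * v (D2 (i,1)) + (mu2 bmax - mu2 0) * v (i,1) + c2 0 :=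
      op_le hmu2c hc2c _ _ h0mem
    rw [show D2 (i+1,0) = (i+1,0) by simp [D2]] at e1'
    rw [show D2 (i,2) = (i,1) by simp [D2]] at e2'
    rw [show D2 (i+1,1) = (i+1,0) by simp [D2]] at u1
    rw [hmu20, hc20, show D2 (i,1) = (i,0) by simp [D2]] at u2
    have prod1 : 0 ≤ (mu2 bmax - mu2 b0) * (v (i+1,0) + v (i,2) - v (i+1,1) - v (i,1)) :=
      mul_nonneg (by linarith [hmu_le hb0]) (by linarith [h2 i 0])
    have hcp : 0 ≤ c2 bp := hc_nonneg hbp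
    linarith
  · show T2 bmax mu2 c2 v (i+1, m+2) + T2 bmax mu2 c2 v (i, m+2)
      ≤ T2 bmax mu2 c2 v (i+1, m+1) + T2 bmax mu2 c2 v (i, m+3)
    obtain ⟨bp, hbp, e1⟩ := op_attains hbmax hmu2c hc2c (v (D2 (i+1, m+1))) (v (i+1, m+1))
    obtain ⟨b0, hb0, e2⟩ := op_attains hbmax hmu2c hc2c (v (D2 (i, m+3))) (v (i, m+3))
    have e1' : T2 bmax mu2 c2 v (i+1, m+1)
        = mu2 bp * v (D2 (i+1,m+1)) + (mu2 bmax - mu2 bp) * v (i+1,m+1) + c2 bp := e1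
    have e2' : T2 bmax mu2 c2 v (i, m+3)
        = mu2 b0 * v (D2 (i,m+3)) + (mu2 bmax - mu2 b0) * v (i,m+3) + c2 b0 := e2
    have u1 : T2 bmax mu2 c2 v (i+1, m+2)
        ≤ mu2 b0 * v (D2 (i+1,m+2)) + (mu2 bmax - mu2 b0) * v (i+1,m+2) + c2 b0 :=
      op_le hmu2c hc2c _ _ hb0
    have u2 : T2 bmax mu2 c2 v (i, m+2)
        ≤ mu2 bp * v (D2 (i,m+2)) + (mu2 bmax - mu2 bp) * v (i,m+2) + c2 bp :=
      op_le hmu2c hc2c _ _ hbp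
    rw [show D2 (i+1,m+1) = (i+1,m) by simp [D2]] at e1'
    rw [show D2 (i,m+3) = (i,m+2) by simp [D2]] at e2'
    rw [show D2 (i+1,m+2) = (i+1,m+1) by simp [D2]] at u1
    rw [show D2 (i,m+2) = (i,m+1) by simp [D2]] at u2
    have prod1 : 0 ≤ mu2 bp * (v (i+1,m) + v (i,m+2) - v (i,m+1) - v (i+1,m+1)) :=
      mul_nonneg (hmu_nonneg hbp) (by linarith [h2 i m])
    have prod2 : 0 ≤ (mu2 bmax - mu2 b0) * (v (i+1,m+1) + v (i,m+3) - v (i+1,m+2) - v (i,m+2)) :=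
      mul_nonneg (by linarith [hmu_le hb0]) (by linarith [h2 i (m+1)])
    linarith

lemma T2_P3 (h2 : IsP2 v) (h3 : IsP3 v) (h4 : IsP4 v) :
    ∀ i j : ℕ, T2 bmax mu2 c2 v (i+1, j+1) + T2 bmax mu2 c2 v (i+1, j)
      ≤ T2 bmax mu2 c2 v (i+2, j) + T2 bmax mu2 c2 v (i, j+1) := by
  have h0mem : (0:ℝ) ∈ Icc (0:ℝ) bmax := ⟨le_rfl, hbmax.le⟩
  have hmaxmem : bmax ∈ Icc (0:ℝ) bmax := ⟨hbmax.le, le_rfl⟩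
  have hmu_le : ∀ {a : ℝ}, a ∈ Icc (0:ℝ) bmax → mu2 a ≤ mu2 bmax :=
    fun ha => hmu2m.monotoneOn ha hmaxmem ha.2
  have hc_nonneg : ∀ {a : ℝ}, a ∈ Icc (0:ℝ) bmax → 0 ≤ c2 a :=
    fun ha => hc20 ▸ hc2m.monotoneOn h0mem ha ha.1
  have hmu_nonneg : ∀ {a : ℝ}, a ∈ Icc (0:ℝ) bmax → 0 ≤ mu2 a :=
    fun ha => hmu20 ▸ hmu2m.monotoneOn h0mem ha ha.1
  intro i j
  rcases j with _ | m
  · show T2 bmax mu2 c2 v (i+1, 1) + T2 bmax mu2 c2 v (i+1, 0)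
      ≤ T2 bmax mu2 c2 v (i+2, 0) + T2 bmax mu2 c2 v (i, 1)
    obtain ⟨bp, hbp, e1⟩ := op_attains hbmax hmu2c hc2c (v (D2 (i+2, 0))) (v (i+2, 0))
    obtain ⟨b0, hb0, e2⟩ := op_attains hbmax hmu2c hc2c (v (D2 (i, 1))) (v (i, 1))
    have e1' : T2 bmax mu2 c2 v (i+2, 0)
        = mu2 bp * v (D2 (i+2,0)) + (mu2 bmax - mu2 bp) * v (i+2,0) + c2 bp := e1
    have e2' : T2 bmax mu2 c2 v (i, 1)
        = mu2 b0 * v (D2 (i,1)) + (mu2 bmax - mu2 b0) * v (i,1) + c2 b0 := e2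
    have u1 : T2 bmax mu2 c2 v (i+1, 1)
        ≤ mu2 b0 * v (D2 (i+1,1)) + (mu2 bmax - mu2 b0) * v (i+1,1) + c2 b0 :=
      op_le hmu2c hc2c _ _ hb0
    have u2 : T2 bmax mu2 c2 v (i+1, 0)
        ≤ mu2 0 * v (D2 (i+1,0)) + (mu2 bmax - mu2 0) * v (i+1,0) + c2 0 :=
      op_le hmu2c hc2c _ _ h0mem
    rw [show D2 (i+2,0) = (i+2,0) by simp [D2]] at e1'
    rw [show D2 (i,1) = (i,0) by simp [D2]] at e2'
    rw [show D2 (i+1,1) = (i+1,0) by simp [D2]] at u1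
    rw [hmu20, hc20, show D2 (i+1,0) = (i+1,0) by simp [D2]] at u2
    have prod1 : 0 ≤ mu2 b0 * (v (i+1,1) + v (i,0) - v (i,1) - v (i+1,0)) :=
      mul_nonneg (hmu_nonneg hb0) (by linarith [h4 i 0])
    have prod2 : 0 ≤ mu2 bmax * (v (i+2,0) + v (i,1) - v (i+1,0) - v (i+1,1)) :=
      mul_nonneg (hmu_nonneg hmaxmem) (by linarith [h3 i 0])
    have hcp : 0 ≤ c2 bp := hc_nonneg hbp
    linarith
  · show T2 bmax mu2 c2 v (i+1, m+2) + T2 bmax mu2 c2 v (i+1, m+1)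
      ≤ T2 bmax mu2 c2 v (i+2, m+1) + T2 bmax mu2 c2 v (i, m+2)
    obtain ⟨bp, hbp, e1⟩ := op_attains hbmax hmu2c hc2c (v (D2 (i+2, m+1))) (v (i+2, m+1))
    obtain ⟨b0, hb0, e2⟩ := op_attains hbmax hmu2c hc2c (v (D2 (i, m+2))) (v (i, m+2))
    have e1' : T2 bmax mu2 c2 v (i+2, m+1)
        = mu2 bp * v (D2 (i+2,m+1)) + (mu2 bmax - mu2 bp) * v (i+2,m+1) + c2 bp := e1
    have e2' : T2 bmax mu2 c2 v (i, m+2)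
        = mu2 b0 * v (D2 (i,m+2)) + (mu2 bmax - mu2 b0) * v (i,m+2) + c2 b0 := e2
    rw [show D2 (i+2,m+1) = (i+2,m) by simp [D2]] at e1'
    rw [show D2 (i,m+2) = (i,m+1) by simp [D2]] at e2'
    rcases le_total (mu2 b0) (mu2 bp) with hpq | hpq
    · have u1 : T2 bmax mu2 c2 v (i+1, m+2)
          ≤ mu2 bp * v (D2 (i+1,m+2)) + (mu2 bmax - mu2 bp) * v (i+1,m+2) + c2 bp :=
        op_le hmu2c hc2c _ _ hbp
      have u2 : T2 bmax mu2 c2 v (i+1, m+1)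
          ≤ mu2 b0 * v (D2 (i+1,m+1)) + (mu2 bmax - mu2 b0) * v (i+1,m+1) + c2 b0 :=
        op_le hmu2c hc2c _ _ hb0
      rw [show D2 (i+1,m+2) = (i+1,m+1) by simp [D2]] at u1
      rw [show D2 (i+1,m+1) = (i+1,m) by simp [D2]] at u2
      have prod1 : 0 ≤ mu2 bp * (v (i+2,m) + v (i,m+1) - v (i+1,m+1) - v (i+1,m)) :=
        mul_nonneg (hmu_nonneg hbp) (by linarith [h3 i m])
      have prod2 : 0 ≤ (mu2 bmax - mu2 bp) * (v (i+2,m+1) + v (i,m+2) - v (i+1,m+2) - v (i+1,m+1)) :=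
        mul_nonneg (by linarith [hmu_le hbp]) (by linarith [h3 i (m+1)])
      have prod3 : 0 ≤ (mu2 bp - mu2 b0) * (v (i+1,m) + v (i,m+2) - v (i,m+1) - v (i+1,m+1)) :=
        mul_nonneg (by linarith) (by linarith [h2 i m])
      linarith
    · have u1 : T2 bmax mu2 c2 v (i+1, m+2)
          ≤ mu2 b0 * v (D2 (i+1,m+2)) + (mu2 bmax - mu2 b0) * v (i+1,m+2) + c2 b0 :=
        op_le hmu2c hc2c _ _ hb0
      have u2 : T2 bmax mu2 c2 v (i+1, m+1)
          ≤ mu2 bp * v (D2 (i+1,m+1)) + (mu2 bmax - mu2 bp) * v (i+1,m+1) + c2 bp :=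
        op_le hmu2c hc2c _ _ hbp
      rw [show D2 (i+1,m+2) = (i+1,m+1) by simp [D2]] at u1
      rw [show D2 (i+1,m+1) = (i+1,m) by simp [D2]] at u2
      have prod1 : 0 ≤ mu2 bp * (v (i+2,m) + v (i,m+1) - v (i+1,m) - v (i+1,m+1)) :=
        mul_nonneg (hmu_nonneg hbp) (by linarith [h3 i m])
      have prod2 : 0 ≤ (mu2 bmax - mu2 bp) * (v (i+2,m+1) + v (i,m+2) - v (i+1,m+1) - v (i+1,m+2)) :=
        mul_nonneg (by linarith [hmu_le hbp]) (by linarith [h3 i (m+1)])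
      have prod3 : 0 ≤ (mu2 b0 - mu2 bp) * (v (i+1,m+2) + v (i,m+1) - v (i,m+2) - v (i+1,m+1)) :=
        mul_nonneg (by linarith) (by linarith [h4 i (m+1)])
      linarith

lemma T2_P4 (h4 : IsP4 v) :
    ∀ i j : ℕ, T2 bmax mu2 c2 v (i+1, j) + T2 bmax mu2 c2 v (i, j+1)
      ≤ T2 bmax mu2 c2 v (i+1, j+1) + T2 bmax mu2 c2 v (i, j) := by
  have h0mem : (0:ℝ) ∈ Icc (0:ℝ) bmax := ⟨le_rfl, hbmax.le⟩
  have hmaxmem : bmax ∈ Icc (0:ℝ) bmax := ⟨hbmax.le, le_rfl⟩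
  have hmu_le : ∀ {a : ℝ}, a ∈ Icc (0:ℝ) bmax → mu2 a ≤ mu2 bmax :=
    fun ha => hmu2m.monotoneOn ha hmaxmem ha.2
  have hc_nonneg : ∀ {a : ℝ}, a ∈ Icc (0:ℝ) bmax → 0 ≤ c2 a :=
    fun ha => hc20 ▸ hc2m.monotoneOn h0mem ha ha.1
  have hmu_nonneg : ∀ {a : ℝ}, a ∈ Icc (0:ℝ) bmax → 0 ≤ mu2 a :=
    fun ha => hmu20 ▸ hmu2m.monotoneOn h0mem ha ha.1
  intro i j
  rcases j with _ | m
  · show T2 bmax mu2 c2 v (i+1, 0) + T2 bmax mu2 c2 v (i, 1)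
      ≤ T2 bmax mu2 c2 v (i+1, 1) + T2 bmax mu2 c2 v (i, 0)
    obtain ⟨bp, hbp, e1⟩ := op_attains hbmax hmu2c hc2c (v (D2 (i+1, 1))) (v (i+1, 1))
    obtain ⟨b0, hb0, e2⟩ := op_attains hbmax hmu2c hc2c (v (D2 (i, 0))) (v (i, 0))
    have e1' : T2 bmax mu2 c2 v (i+1, 1)
        = mu2 bp * v (D2 (i+1,1)) + (mu2 bmax - mu2 bp) * v (i+1,1) + c2 bp := e1
    have e2' : T2 bmax mu2 c2 v (i, 0)
        = mu2 b0 * v (D2 (i,0)) + (mu2 bmax - mu2 b0) * v (i,0) + c2 b0 := e2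
    have u1 : T2 bmax mu2 c2 v (i+1, 0)
        ≤ mu2 0 * v (D2 (i+1,0)) + (mu2 bmax - mu2 0) * v (i+1,0) + c2 0 :=
      op_le hmu2c hc2c _ _ h0mem
    have u2 : T2 bmax mu2 c2 v (i, 1)
        ≤ mu2 bp * v (D2 (i,1)) + (mu2 bmax - mu2 bp) * v (i,1) + c2 bp :=
      op_le hmu2c hc2c _ _ hbp
    rw [show D2 (i+1,1) = (i+1,0) by simp [D2]] at e1'
    rw [show D2 (i,0) = (i,0) by simp [D2]] at e2'
    rw [hmu20, hc20, show D2 (i+1,0) = (i+1,0) by simp [D2]] at u1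
    rw [show D2 (i,1) = (i,0) by simp [D2]] at u2
    have prod1 : 0 ≤ (mu2 bmax - mu2 bp) * (v (i+1,1) + v (i,0) - v (i+1,0) - v (i,1)) :=
      mul_nonneg (by linarith [hmu_le hbp]) (by linarith [h4 i 0])
    have hcp : 0 ≤ c2 b0 := hc_nonneg hb0
    linarith
  · show T2 bmax mu2 c2 v (i+1, m+1) + T2 bmax mu2 c2 v (i, m+2)
      ≤ T2 bmax mu2 c2 v (i+1, m+2) + T2 bmax mu2 c2 v (i, m+1)
    obtain ⟨bp, hbp, e1⟩ := op_attains hbmax hmu2c hc2c (v (D2 (i+1, m+2))) (v (i+1, m+2))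
    obtain ⟨b0, hb0, e2⟩ := op_attains hbmax hmu2c hc2c (v (D2 (i, m+1))) (v (i, m+1))
    have e1' : T2 bmax mu2 c2 v (i+1, m+2)
        = mu2 bp * v (D2 (i+1,m+2)) + (mu2 bmax - mu2 bp) * v (i+1,m+2) + c2 bp := e1
    have e2' : T2 bmax mu2 c2 v (i, m+1)
        = mu2 b0 * v (D2 (i,m+1)) + (mu2 bmax - mu2 b0) * v (i,m+1) + c2 b0 := e2
    have u1 : T2 bmax mu2 c2 v (i+1, m+1)
        ≤ mu2 b0 * v (D2 (i+1,m+1)) + (mu2 bmax - mu2 b0) * v (i+1,m+1) + c2 b0 :=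
      op_le hmu2c hc2c _ _ hb0
    have u2 : T2 bmax mu2 c2 v (i, m+2)
        ≤ mu2 bp * v (D2 (i,m+2)) + (mu2 bmax - mu2 bp) * v (i,m+2) + c2 bp :=
      op_le hmu2c hc2c _ _ hbp
    rw [show D2 (i+1,m+2) = (i+1,m+1) by simp [D2]] at e1'
    rw [show D2 (i,m+1) = (i,m) by simp [D2]] at e2'
    rw [show D2 (i+1,m+1) = (i+1,m) by simp [D2]] at u1
    rw [show D2 (i,m+2) = (i,m+1) by simp [D2]] at u2
    have prod1 : 0 ≤ (mu2 bmax - mu2 bp) * (v (i+1,m+2) + v (i,m+1) - v (i+1,m+1) - v (i,m+2)) :=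
      mul_nonneg (by linarith [hmu_le hbp]) (by linarith [h4 i (m+1)])
    have prod2 : 0 ≤ mu2 b0 * (v (i+1,m+1) + v (i,m) - v (i+1,m) - v (i,m+1)) :=
      mul_nonneg (hmu_nonneg hb0) (by linarith [h4 i m])
    linarith

end Preserve2

lemma T_preserves
    {lam amax bmax h1 h2 : ℝ} {mu1 mu2 c1 c2 : ℝ → ℝ}
    (hlam : 0 < lam) (hamax : 0 < amax) (hbmax : 0 < bmax)
    (hmu1c : ContinuousOn mu1 (Icc 0 amax)) (hmu1m : StrictMonoOn mu1 (Icc 0 amax))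
    (hmu2c : ContinuousOn mu2 (Icc 0 bmax)) (hmu2m : StrictMonoOn mu2 (Icc 0 bmax))
    (hc1c : ContinuousOn c1 (Icc 0 amax)) (hc1m : StrictMonoOn c1 (Icc 0 amax))
    (hc2c : ContinuousOn c2 (Icc 0 bmax)) (hc2m : StrictMonoOn c2 (Icc 0 bmax))
    (hmu10 : mu1 0 = 0) (hmu20 : mu2 0 = 0) (hc10 : c1 0 = 0) (hc20 : c2 0 = 0)
    (v : ℕ × ℕ → ℝ) (hP2 : IsP2 v) (hP3 : IsP3 v) (hP4 : IsP4 v) :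
    IsP2 (T lam amax bmax h1 h2 mu1 mu2 c1 c2 v) ∧
    IsP3 (T lam amax bmax h1 h2 mu1 mu2 c1 c2 v) ∧
    IsP4 (T lam amax bmax h1 h2 mu1 mu2 c1 c2 v) := by
  have t1p2 := T1_P2 hamax hmu1c hmu1m hc1c hc1m hmu10 hc10 v hP2
  have t1p3 := T1_P3 hamax hmu1c hmu1m hc1c hc1m hmu10 hc10 v hP3
  have t1p4 := T1_P4 hamax hmu1c hmu1m hc1c hc1m hmu10 hc10 v hP2 hP3 hP4
  have t2p2 := T2_P2 hbmax hmu2c hmu2m hc2c hc2m hmu20 hc20 v hP2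
  have t2p3 := T2_P3 hbmax hmu2c hmu2m hc2c hc2m hmu20 hc20 v hP2 hP3 hP4
  have t2p4 := T2_P4 hbmax hmu2c hmu2m hc2c hc2m hmu20 hc20 v hP4
  refine ⟨?_, ?_, ?_⟩
  · intro i j
    have hl := mul_le_mul_of_nonneg_left (hP2 (i+1) j) hlam.le
    simp only [T]
    push_cast
    linarith [t1p2 i j, t2p2 i j]
  · intro i j
    have hl := mul_le_mul_of_nonneg_left (hP3 (i+1) j) hlam.le
    simp only [T]
    push_cast
    linarith [t1p3 i j, t2p3 i j]
  · intro i j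
    have hl := mul_le_mul_of_nonneg_left (hP4 (i+1) j) hlam.le
    simp only [T]
    push_cast
    linarith [t1p4 i j, t2p4 i j]

theorem property_4_2_ii
    (lam amax bmax h1 h2 : ℝ) (mu1 mu2 c1 c2 : ℝ → ℝ)
    (hlam : 0 < lam) (hamax : 0 < amax) (hbmax : 0 < bmax)
    (hmu1c : ContinuousOn mu1 (Icc 0 amax)) (hmu1m : StrictMonoOn mu1 (Icc 0 amax))
    (hmu2c : ContinuousOn mu2 (Icc 0 bmax)) (hmu2m : StrictMonoOn mu2 (Icc 0 bmax))
    (hc1c : ContinuousOn c1 (Icc 0 amax)) (hc1m : StrictMonoOn c1 (Icc 0 amax))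
    (hc2c : ContinuousOn c2 (Icc 0 bmax)) (hc2m : StrictMonoOn c2 (Icc 0 bmax))
    (hmu10 : mu1 0 = 0) (hmu20 : mu2 0 = 0) (hc10 : c1 0 = 0) (hc20 : c2 0 = 0)
    (hh1 : 0 ≤ h1) (hh2 : 0 ≤ h2)
    (huni : lam + mu1 amax + mu2 bmax = 1) :
    ∀ (n : ℕ) (x : ℕ × ℕ), 1 ≤ x.1 → 1 ≤ x.2 →
      vIter lam amax bmax h1 h2 mu1 mu2 c1 c2 n (x.1 + 1, x.2 - 1) - 2 * vIter lam amax bmax h1 h2 mu1 mu2 c1 c2 n x + vIter lam amax bmax h1 h2 mu1 mu2 c1 c2 n (x.1 - 1, x.2 + 1) ≥ 0 := by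
  have key : ∀ n : ℕ, IsP2 (vIter lam amax bmax h1 h2 mu1 mu2 c1 c2 n) ∧
      IsP3 (vIter lam amax bmax h1 h2 mu1 mu2 c1 c2 n) ∧
      IsP4 (vIter lam amax bmax h1 h2 mu1 mu2 c1 c2 n) := by
    intro n
    induction n with
    | zero =>
      refine ⟨?_, ?_, ?_⟩ <;> intro i j <;> simp [vIter]
    | succ n ih =>
      have : vIter lam amax bmax h1 h2 mu1 mu2 c1 c2 (n+1)
          = T lam amax bmax h1 h2 mu1 mu2 c1 c2 (vIter lam amax bmax h1 h2 mu1 mu2 c1 c2 n) := rfl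
      rw [this]
      exact T_preserves hlam hamax hbmax hmu1c hmu1m hmu2c hmu2m hc1c hc1m hc2c hc2m
        hmu10 hmu20 hc10 hc20 _ ih.1 ih.2.1 ih.2.2
  intro n x hx1 hx2
  obtain ⟨x1, x2⟩ := x
  simp only at hx1 hx2
  obtain ⟨i, rfl⟩ : ∃ i, x1 = i + 1 := ⟨x1 - 1, by omega⟩
  obtain ⟨j, rfl⟩ : ∃ j, x2 = j + 1 := ⟨x2 - 1, by omega⟩
  obtain ⟨k2, k3, -⟩ := key n
  have h2' := k2 i j
  have h3' := k3 i j
  have e1 : (i + 1 + 1, j + 1 - 1) = ((i+2 : ℕ), j) := by simp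
  have e2 : (i + 1 - 1, j + 1 + 1) = ((i : ℕ), j+2) := by simp
  rw [show ((i+1,j+1) : ℕ × ℕ).1 = i+1 from rfl, show ((i+1,j+1) : ℕ × ℕ).2 = j+1 from rfl]
  rw [e1, e2]
  linarith
end

section
/- Monotonicity of the optimal node-2 allocation in the node-2 queue length (Theorem 1(i), operator form): let v : E → ℝ and let x = (x₁, x₂) ∈ E with x₂ ≥ 1 satisfy the strict convexity condition v(x + e₂) − v(x) > v(x) − v(x − e₂). If b₁ ∈ argT₂v(x + e₂) and b₂ ∈ argT₂v(x), then b₁ ≥ b₂. -/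
open Set

theorem theorem_1_i
    (lam amax bmax : ℝ) (mu1 mu2 c1 c2 : ℝ → ℝ)
    (hlam : 0 < lam) (hamax : 0 < amax) (hbmax : 0 < bmax)
    (hmu1c : ContinuousOn mu1 (Icc 0 amax)) (hmu1m : StrictMonoOn mu1 (Icc 0 amax))
    (hmu2c : ContinuousOn mu2 (Icc 0 bmax)) (hmu2m : StrictMonoOn mu2 (Icc 0 bmax))
    (hc1c : ContinuousOn c1 (Icc 0 amax)) (hc1m : StrictMonoOn c1 (Icc 0 amax))
    (hc2c : ContinuousOn c2 (Icc 0 bmax)) (hc2m : StrictMonoOn c2 (Icc 0 bmax))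
    (hmu10 : mu1 0 = 0) (hmu20 : mu2 0 = 0) (hc10 : c1 0 = 0) (hc20 : c2 0 = 0)
    (huni : lam + mu1 amax + mu2 bmax = 1)
    (v : ℕ × ℕ → ℝ) (x : ℕ × ℕ) (hx2 : 1 ≤ x.2)
    (hconv : v (x.1, x.2 + 1) - v x > v x - v (x.1, x.2 - 1))
    (b1 b2 : ℝ)
    (hb1 : b1 ∈ argT2 bmax mu2 c2 v (x.1, x.2 + 1))
    (hb2 : b2 ∈ argT2 bmax mu2 c2 v x) :
    b1 ≥ b2 := by
  -- unfold the two minimizer memberships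
  obtain ⟨hb1I, hb1e⟩ := hb1
  obtain ⟨hb2I, hb2e⟩ := hb2
  have hD2a : D2 (x.1, x.2 + 1) = x := by
    simp [D2]
  have hD2b : D2 x = (x.1, x.2 - 1) := by
    have : x = (x.1, x.2) := rfl
    rw [this]
    simp [D2, hx2]
  -- the objective functions at the two states
  set f1 : ℝ → ℝ := fun b => mu2 b * v x + (mu2 bmax - mu2 b) * v (x.1, x.2 + 1) + c2 b with hf1
  set f2 : ℝ → ℝ := fun b => mu2 b * v (x.1, x.2 - 1) + (mu2 bmax - mu2 b) * v x + c2 b with hf2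
  have hcont1 : ContinuousOn f1 (Icc 0 bmax) :=
    ((hmu2c.mul continuousOn_const).add
      ((continuousOn_const.sub hmu2c).mul continuousOn_const)).add hc2c
  have hcont2 : ContinuousOn f2 (Icc 0 bmax) :=
    ((hmu2c.mul continuousOn_const).add
      ((continuousOn_const.sub hmu2c).mul continuousOn_const)).add hc2c
  have hbdd1 : BddBelow (f1 '' Icc 0 bmax) :=
    (isCompact_Icc.image_of_continuousOn hcont1).bddBelow
  have hbdd2 : BddBelow (f2 '' Icc 0 bmax) :=
    (isCompact_Icc.image_of_continuousOn hcont2).bddBelow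
  have hT1 : T2 bmax mu2 c2 v (x.1, x.2 + 1) = sInf (f1 '' Icc 0 bmax) := by
    rw [T2, hD2a]
  have hT2 : T2 bmax mu2 c2 v x = sInf (f2 '' Icc 0 bmax) := by
    rw [T2, hD2b]
  have key1 : f1 b1 ≤ f1 b2 := by
    have h1 : f1 b1 = sInf (f1 '' Icc 0 bmax) := by
      rw [← hT1, ← hb1e, hD2a]
    rw [h1]
    exact csInf_le hbdd1 ⟨b2, hb2I, rfl⟩
  have key2 : f2 b2 ≤ f2 b1 := by
    have h2 : f2 b2 = sInf (f2 '' Icc 0 bmax) := by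
      rw [← hT2, ← hb2e, hD2b]
    rw [h2]
    exact csInf_le hbdd2 ⟨b1, hb1I, rfl⟩
  by_contra hlt
  push_neg at hlt
  have hmu : mu2 b1 < mu2 b2 := hmu2m hb1I hb2I hlt
  have hx : v x = v (x.1, x.2) := rfl
  simp only [hf1, hf2] at key1 key2
  nlinarith [key1, key2, hconv, hmu]
end

section
/- Monotonicity of the optimal node-1 allocation in the node-1 queue length (Theorem 1(ii), operator form): let v : E → ℝ and let x = (x₁, x₂) ∈ E with x₁ ≥ 1 satisfy the strict supermodularity condition v(x + e₁) − v(x + e₂) > v(x) − v(x − e₁ + e₂). If a₁ ∈ argT₁v(x + e₁) and a₂ ∈ argT₁v(x), then a₁ ≥ a₂. -/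
open Set

theorem theorem_1_ii
    (lam amax bmax : ℝ) (mu1 mu2 c1 c2 : ℝ → ℝ)
    (hlam : 0 < lam) (hamax : 0 < amax) (hbmax : 0 < bmax)
    (hmu1c : ContinuousOn mu1 (Icc 0 amax)) (hmu1m : StrictMonoOn mu1 (Icc 0 amax))
    (hmu2c : ContinuousOn mu2 (Icc 0 bmax)) (hmu2m : StrictMonoOn mu2 (Icc 0 bmax))
    (hc1c : ContinuousOn c1 (Icc 0 amax)) (hc1m : StrictMonoOn c1 (Icc 0 amax))
    (hc2c : ContinuousOn c2 (Icc 0 bmax)) (hc2m : StrictMonoOn c2 (Icc 0 bmax))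
    (hmu10 : mu1 0 = 0) (hmu20 : mu2 0 = 0) (hc10 : c1 0 = 0) (hc20 : c2 0 = 0)
    (huni : lam + mu1 amax + mu2 bmax = 1)
    (v : ℕ × ℕ → ℝ) (x : ℕ × ℕ) (hx1 : 1 ≤ x.1)
    (hsup : v (x.1 + 1, x.2) - v (x.1, x.2 + 1) > v x - v (x.1 - 1, x.2 + 1))
    (a1 a2 : ℝ)
    (ha1 : a1 ∈ argT1 amax mu1 c1 v (x.1 + 1, x.2))
    (ha2 : a2 ∈ argT1 amax mu1 c1 v x) :
    a1 ≥ a2 := by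
  by_contra h
  push_neg at h
  have hD1a : D1 (x.1 + 1, x.2) = (x.1, x.2 + 1) := by simp [D1]
  have hD1b : D1 x = (x.1 - 1, x.2 + 1) := by
    simp [D1, hx1]
  obtain ⟨ha1m, ha1e⟩ := ha1
  obtain ⟨ha2m, ha2e⟩ := ha2
  have hmu : mu1 a1 < mu1 a2 := hmu1m ha1m ha2m h
  -- boundedness of the objective images
  have hbdd : ∀ y : ℕ × ℕ, BddBelow
      ((fun a => mu1 a * v (D1 y) + (mu1 amax - mu1 a) * v y + c1 a) '' Icc 0 amax) := by
    intro y
    have hcont : ContinuousOn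
        (fun a => mu1 a * v (D1 y) + (mu1 amax - mu1 a) * v y + c1 a) (Icc 0 amax) :=
      (((hmu1c.mul continuousOn_const).add
        ((continuousOn_const.sub hmu1c).mul continuousOn_const)).add hc1c)
    exact (isCompact_Icc.image_of_continuousOn hcont).bddBelow
  have key1 : mu1 a1 * v (D1 (x.1 + 1, x.2)) + (mu1 amax - mu1 a1) * v (x.1 + 1, x.2) + c1 a1 ≤
      mu1 a2 * v (D1 (x.1 + 1, x.2)) + (mu1 amax - mu1 a2) * v (x.1 + 1, x.2) + c1 a2 := by
    rw [ha1e]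
    exact csInf_le (hbdd _) ⟨a2, ha2m, rfl⟩
  have key2 : mu1 a2 * v (D1 x) + (mu1 amax - mu1 a2) * v x + c1 a2 ≤
      mu1 a1 * v (D1 x) + (mu1 amax - mu1 a1) * v x + c1 a1 := by
    rw [ha2e]
    exact csInf_le (hbdd _) ⟨a1, ha1m, rfl⟩
  rw [hD1a] at key1
  rw [hD1b] at key2
  nlinarith [mul_pos (sub_pos.mpr hmu) (sub_pos.mpr hsup)]
end

section
/- Relation between the two nodes' optimal allocations (Theorem 2): assume a_max = b_max, and assume that for all 0 ≤ t < s ≤ a_max one has c₁(s) − c₁(t) > c₂(s) − c₂(t) and μ₂(s) − μ₂(t) ≥ μ₁(s) − μ₁(t). Let v : E → ℝ be nondecreasing in each coordinate and satisfy v(y − e₁ + e₂) ≥ v(y − e₂) for all y = (y₁, y₂) with y₁ ≥ 1 and y₂ ≥ 1. Then for every x = (x₁, x₂) with x₁ ≥ 1 and x₂ ≥ 1, if a ∈ argT₁v(x) and b ∈ argT₂v(x), then b ≥ a. -/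
open Set

theorem theorem_2
    (lam amax bmax : ℝ) (mu1 mu2 c1 c2 : ℝ → ℝ)
    (hlam : 0 < lam) (hamax : 0 < amax) (hbmax : 0 < bmax)
    (hmu1c : ContinuousOn mu1 (Icc 0 amax)) (hmu1m : StrictMonoOn mu1 (Icc 0 amax))
    (hmu2c : ContinuousOn mu2 (Icc 0 bmax)) (hmu2m : StrictMonoOn mu2 (Icc 0 bmax))
    (hc1c : ContinuousOn c1 (Icc 0 amax)) (hc1m : StrictMonoOn c1 (Icc 0 amax))
    (hc2c : ContinuousOn c2 (Icc 0 bmax)) (hc2m : StrictMonoOn c2 (Icc 0 bmax))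
    (hmu10 : mu1 0 = 0) (hmu20 : mu2 0 = 0) (hc10 : c1 0 = 0) (hc20 : c2 0 = 0)
    (huni : lam + mu1 amax + mu2 bmax = 1)
    (hab : amax = bmax)
    (hcost : ∀ t s : ℝ, 0 ≤ t → t < s → s ≤ amax → c1 s - c1 t > c2 s - c2 t)
    (hrate : ∀ t s : ℝ, 0 ≤ t → t < s → s ≤ amax → mu2 s - mu2 t ≥ mu1 s - mu1 t)
    (v : ℕ × ℕ → ℝ)
    (hmono1 : ∀ y : ℕ × ℕ, v (y.1 + 1, y.2) ≥ v y)
    (hmono2 : ∀ y : ℕ × ℕ, v (y.1, y.2 + 1) ≥ v y)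
    (hv : ∀ y : ℕ × ℕ, 1 ≤ y.1 → 1 ≤ y.2 → v (y.1 - 1, y.2 + 1) ≥ v (y.1, y.2 - 1))
    (x : ℕ × ℕ) (hx1 : 1 ≤ x.1) (hx2 : 1 ≤ x.2)
    (a b : ℝ)
    (ha : a ∈ argT1 amax mu1 c1 v x)
    (hb : b ∈ argT2 bmax mu2 c2 v x) :
    b ≥ a := by
  by_contra hba
  push_neg at hba
  -- hba : b < a
  obtain ⟨haI, haEq⟩ := ha
  obtain ⟨hbI, hbEq⟩ := hb
  subst hab
  have hbI' : b ∈ Icc (0:ℝ) amax := hbI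
  have haI' : a ∈ Icc (0:ℝ) amax := haI
  set A := v (D1 x) with hA
  set B := v (D2 x) with hB
  set V := v x with hV
  -- boundedness of the two image sets
  have hcont1 : ContinuousOn (fun t => mu1 t * A + (mu1 amax - mu1 t) * V + c1 t)
      (Icc 0 amax) := by
    exact ((hmu1c.mul continuousOn_const).add
      ((continuousOn_const.sub hmu1c).mul continuousOn_const)).add hc1c
  have hcont2 : ContinuousOn (fun t => mu2 t * B + (mu2 amax - mu2 t) * V + c2 t)
      (Icc 0 amax) := by
    exact ((hmu2c.mul continuousOn_const).add
      ((continuousOn_const.sub hmu2c).mul continuousOn_const)).add hc2c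
  have hbd1 : BddBelow ((fun t => mu1 t * A + (mu1 amax - mu1 t) * V + c1 t) '' Icc 0 amax) :=
    (isCompact_Icc.image_of_continuousOn hcont1).bddBelow
  have hbd2 : BddBelow ((fun t => mu2 t * B + (mu2 amax - mu2 t) * V + c2 t) '' Icc 0 amax) :=
    (isCompact_Icc.image_of_continuousOn hcont2).bddBelow
  have h1 : mu1 a * A + (mu1 amax - mu1 a) * V + c1 a ≤
      mu1 b * A + (mu1 amax - mu1 b) * V + c1 b := by
    rw [haEq]
    exact csInf_le hbd1 (mem_image_of_mem _ hbI')
  have h2 : mu2 b * B + (mu2 amax - mu2 b) * V + c2 b ≤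
      mu2 a * B + (mu2 amax - mu2 a) * V + c2 a := by
    rw [hbEq]
    exact csInf_le hbd2 (mem_image_of_mem _ haI')
  -- structural facts about v
  have hD1 : D1 x = (x.1 - 1, x.2 + 1) := if_pos hx1
  have hD2 : D2 x = (x.1, x.2 - 1) := if_pos hx2
  have hAB : A ≥ B := by
    rw [hA, hB, hD1, hD2]; exact hv x hx1 hx2
  have hVB : V ≥ B := by
    have := hmono2 (x.1, x.2 - 1)
    simp only at this
    rw [hV, hB, hD2]
    have : v (x.1, x.2 - 1 + 1) ≥ v (x.1, x.2 - 1) := this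
    rwa [Nat.sub_add_cancel hx2] at this
  -- monotonicity facts
  have hm1 : mu1 b < mu1 a := hmu1m hbI' haI' hba
  have hm2 : mu2 a - mu2 b ≥ mu1 a - mu1 b := hrate b a hbI'.1 hba haI'.2
  have hc : c1 a - c1 b > c2 a - c2 b := hcost b a hbI'.1 hba haI'.2
  nlinarith [mul_le_mul_of_nonneg_left (sub_le_sub_left hAB V) (le_of_lt (sub_pos.mpr hm1)),
    mul_le_mul_of_nonneg_right hm2 (sub_nonneg.mpr hVB)]
end

section
/- Swap inequality (core estimate in the proof of Theorem 2): assume a_max = b_max, and assume that for all 0 ≤ t ≤ s ≤ a_max one has c₁(s) − c₁(t) ≥ c₂(s) − c₂(t) and μ₂(s) − μ₂(t) ≥ μ₁(s) − μ₁(t). Let v : E → ℝ be nondecreasing in each coordinate and satisfy v(y − e₁ + e₂) ≥ v(y − e₂) for all y = (y₁, y₂) with y₁ ≥ 1 and y₂ ≥ 1. Then for every x = (x₁, x₂) with x₁ ≥ 1, x₂ ≥ 1 and every pair of actions a ≥ b in [0, a_max]: μ₁(a) v(x − e₁ + e₂) + (μ₁(a_max) − μ₁(a)) v(x) + c₁(a)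 + μ₂(b) v(x − e₂) + (μ₂(b_max) − μ₂(b)) v(x) + c₂(b) ≥ μ₁(b) v(x − e₁ + e₂) + (μ₁(a_max) − μ₁(b)) v(x) + c₁(b) + μ₂(a) v(x − e₂) + (μ₂(b_max) − μ₂(a)) v(x) + c₂(a). -/
open Set

theorem swap_inequality
    (lam amax bmax : ℝ) (mu1 mu2 c1 c2 : ℝ → ℝ)
    (hlam : 0 < lam) (hamax : 0 < amax) (hbmax : 0 < bmax)
    (hmu1c : ContinuousOn mu1 (Icc 0 amax)) (hmu1m : StrictMonoOn mu1 (Icc 0 amax))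
    (hmu2c : ContinuousOn mu2 (Icc 0 bmax)) (hmu2m : StrictMonoOn mu2 (Icc 0 bmax))
    (hc1c : ContinuousOn c1 (Icc 0 amax)) (hc1m : StrictMonoOn c1 (Icc 0 amax))
    (hc2c : ContinuousOn c2 (Icc 0 bmax)) (hc2m : StrictMonoOn c2 (Icc 0 bmax))
    (hmu10 : mu1 0 = 0) (hmu20 : mu2 0 = 0) (hc10 : c1 0 = 0) (hc20 : c2 0 = 0)
    (huni : lam + mu1 amax + mu2 bmax = 1)
    (hab : amax = bmax)
    (hcost : ∀ t s : ℝ, 0 ≤ t → t ≤ s → s ≤ amax → c1 s - c1 t ≥ c2 s - c2 t)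
    (hrate : ∀ t s : ℝ, 0 ≤ t → t ≤ s → s ≤ amax → mu2 s - mu2 t ≥ mu1 s - mu1 t)
    (v : ℕ × ℕ → ℝ)
    (hmono1 : ∀ y : ℕ × ℕ, v (y.1 + 1, y.2) ≥ v y)
    (hmono2 : ∀ y : ℕ × ℕ, v (y.1, y.2 + 1) ≥ v y)
    (hv : ∀ y : ℕ × ℕ, 1 ≤ y.1 → 1 ≤ y.2 → v (y.1 - 1, y.2 + 1) ≥ v (y.1, y.2 - 1))
    (x : ℕ × ℕ) (hx1 : 1 ≤ x.1) (hx2 : 1 ≤ x.2)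
    (a b : ℝ) (ha : a ∈ Icc 0 amax) (hb : b ∈ Icc 0 amax) (hba : b ≤ a) :
    mu1 a * v (x.1 - 1, x.2 + 1) + (mu1 amax - mu1 a) * v x + c1 a +
      (mu2 b * v (x.1, x.2 - 1) + (mu2 bmax - mu2 b) * v x + c2 b) ≥
    mu1 b * v (x.1 - 1, x.2 + 1) + (mu1 amax - mu1 b) * v x + c1 b +
      (mu2 a * v (x.1, x.2 - 1) + (mu2 bmax - mu2 a) * v x + c2 a) := by
  have hA := hv x hx1 hx2
  have hB : v (x.1, x.2 - 1) ≤ v (x.1, x.2) := by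
    have := hmono2 (x.1, x.2 - 1)
    simpa [Nat.sub_add_cancel hx2] using this
  have hvx : v x = v (x.1, x.2) := by cases x; rfl
  have hmu : mu1 b ≤ mu1 a := hmu1m.monotoneOn hb ha hba
  have hr := hrate b a hb.1 hba ha.2
  have hc := hcost b a hb.1 hba ha.2
  rw [hvx]
  nlinarith [mul_nonneg (sub_nonneg.2 hmu) (sub_nonneg.2 hA),
    mul_nonneg (sub_nonneg.2 hr) (sub_nonneg.2 hB)]
end

section
/- The dynamic programming operator preserves coordinatewise monotonicity (induction step of Property 4.1(i)): if v : E → ℝ satisfies v(y + e₁) ≥ v(y) and v(y + e₂) ≥ v(y) for all y ∈ E, then T₁v, T₂v, and Tv all satisfy the same two inequalities at every state; in particular Tv(x + e_i) ≥ Tv(x) for all x ∈ E and i ∈ {1, 2}. -/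
open Set

lemma key_sInf_mono (amax : ℝ) (hamax : 0 < amax) (mu c : ℝ → ℝ)
    (hmc : ContinuousOn mu (Icc 0 amax)) (hcc : ContinuousOn c (Icc 0 amax))
    (hmm : StrictMonoOn mu (Icc 0 amax)) (hm0 : mu 0 = 0)
    (A B A' B' : ℝ) (hA : A ≤ A') (hB : B ≤ B') :
    sInf ((fun a => mu a * A + (mu amax - mu a) * B + c a) '' Icc 0 amax) ≤
    sInf ((fun a => mu a * A' + (mu amax - mu a) * B' + c a) '' Icc 0 amax) := by
  have hne : (Icc (0:ℝ) amax).Nonempty := ⟨0, by constructor <;> linarith⟩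
  have hcont : ContinuousOn (fun a => mu a * A + (mu amax - mu a) * B + c a) (Icc 0 amax) := by
    exact ((hmc.mul continuousOn_const).add
      (((continuousOn_const.sub hmc)).mul continuousOn_const)).add hcc
  have hcomp : IsCompact ((fun a => mu a * A + (mu amax - mu a) * B + c a) '' Icc 0 amax) :=
    (isCompact_Icc).image_of_continuousOn hcont
  have hbdd : BddBelow ((fun a => mu a * A + (mu amax - mu a) * B + c a) '' Icc 0 amax) :=
    hcomp.bddBelow
  apply le_csInf (hne.image _)
  rintro b ⟨a, ha, rfl⟩
  have hle : (fun a => mu a * A + (mu amax - mu a) * B + c a) a ≤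
      mu a * A' + (mu amax - mu a) * B' + c a := by
    have h0a : 0 ≤ mu a := by
      rcases eq_or_lt_of_le ha.1 with h | h
      · simp [← h, hm0]
      · have := hmm ⟨le_refl 0, le_of_lt hamax⟩ ha (by exact h)
        rw [hm0] at this; linarith
    have haam : mu a ≤ mu amax := by
      rcases eq_or_lt_of_le ha.2 with h | h
      · rw [h]
      · exact le_of_lt (hmm ha ⟨le_of_lt hamax, le_refl _⟩ h)
    have h1 : mu a * A ≤ mu a * A' := mul_le_mul_of_nonneg_left hA h0a
    have h2 : (mu amax - mu a) * B ≤ (mu amax - mu a) * B' :=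
      mul_le_mul_of_nonneg_left hB (by linarith)
    simp only
    linarith
  exact le_trans (csInf_le hbdd ⟨a, ha, rfl⟩) hle

theorem T_preserves_monotonicity
    (lam amax bmax h1 h2 : ℝ) (mu1 mu2 c1 c2 : ℝ → ℝ)
    (hlam : 0 < lam) (hamax : 0 < amax) (hbmax : 0 < bmax)
    (hmu1c : ContinuousOn mu1 (Icc 0 amax)) (hmu1m : StrictMonoOn mu1 (Icc 0 amax))
    (hmu2c : ContinuousOn mu2 (Icc 0 bmax)) (hmu2m : StrictMonoOn mu2 (Icc 0 bmax))
    (hc1c : ContinuousOn c1 (Icc 0 amax)) (hc1m : StrictMonoOn c1 (Icc 0 amax))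
    (hc2c : ContinuousOn c2 (Icc 0 bmax)) (hc2m : StrictMonoOn c2 (Icc 0 bmax))
    (hmu10 : mu1 0 = 0) (hmu20 : mu2 0 = 0) (hc10 : c1 0 = 0) (hc20 : c2 0 = 0)
    (hh1 : 0 ≤ h1) (hh2 : 0 ≤ h2)
    (huni : lam + mu1 amax + mu2 bmax = 1)
    (v : ℕ × ℕ → ℝ)
    (hmono1 : ∀ y : ℕ × ℕ, v (y.1 + 1, y.2) ≥ v y)
    (hmono2 : ∀ y : ℕ × ℕ, v (y.1, y.2 + 1) ≥ v y) :
    (∀ x : ℕ × ℕ, T1 amax mu1 c1 v (x.1 + 1, x.2) ≥ T1 amax mu1 c1 v x) ∧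
    (∀ x : ℕ × ℕ, T1 amax mu1 c1 v (x.1, x.2 + 1) ≥ T1 amax mu1 c1 v x) ∧
    (∀ x : ℕ × ℕ, T2 bmax mu2 c2 v (x.1 + 1, x.2) ≥ T2 bmax mu2 c2 v x) ∧
    (∀ x : ℕ × ℕ, T2 bmax mu2 c2 v (x.1, x.2 + 1) ≥ T2 bmax mu2 c2 v x) ∧
    (∀ x : ℕ × ℕ, T lam amax bmax h1 h2 mu1 mu2 c1 c2 v (x.1 + 1, x.2) ≥
      T lam amax bmax h1 h2 mu1 mu2 c1 c2 v x) ∧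
    (∀ x : ℕ × ℕ, T lam amax bmax h1 h2 mu1 mu2 c1 c2 v (x.1, x.2 + 1) ≥
      T lam amax bmax h1 h2 mu1 mu2 c1 c2 v x) := by
  have key1 := key_sInf_mono amax hamax mu1 c1 hmu1c hc1c hmu1m hmu10
  have key2 := key_sInf_mono bmax hbmax mu2 c2 hmu2c hc2c hmu2m hmu20
  have hT1a : ∀ x : ℕ × ℕ, T1 amax mu1 c1 v (x.1 + 1, x.2) ≥ T1 amax mu1 c1 v x := by
    intro ⟨x1, x2⟩
    unfold T1
    apply key1
    · -- v (D1 (x1,x2)) ≤ v (D1 (x1+1,x2))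
      rcases Nat.eq_zero_or_pos x1 with h | h
      · subst h; simpa [D1] using hmono2 (0, x2)
      · have : D1 (x1, x2) = (x1 - 1, x2 + 1) := by simp [D1]; omega
        rw [this]
        have hd : D1 (x1 + 1, x2) = (x1, x2 + 1) := by simp [D1]
        rw [hd]
        have := hmono1 (x1 - 1, x2 + 1)
        have hx : x1 - 1 + 1 = x1 := by omega
        rwa [hx] at this
    · exact hmono1 (x1, x2)
  have hT1b : ∀ x : ℕ × ℕ, T1 amax mu1 c1 v (x.1, x.2 + 1) ≥ T1 amax mu1 c1 v x := by
    intro ⟨x1, x2⟩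
    unfold T1
    apply key1
    · rcases Nat.eq_zero_or_pos x1 with h | h
      · subst h; simpa [D1] using hmono2 (0, x2)
      · have h1' : D1 (x1, x2) = (x1 - 1, x2 + 1) := by simp [D1]; omega
        have h2' : D1 (x1, x2 + 1) = (x1 - 1, x2 + 2) := by simp [D1]; omega
        rw [h1', h2']
        simpa using hmono2 (x1 - 1, x2 + 1)
    · exact hmono2 (x1, x2)
  have hT2a : ∀ x : ℕ × ℕ, T2 bmax mu2 c2 v (x.1 + 1, x.2) ≥ T2 bmax mu2 c2 v x := by
    intro ⟨x1, x2⟩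
    unfold T2
    apply key2
    · rcases Nat.eq_zero_or_pos x2 with h | h
      · subst h; simpa [D2] using hmono1 (x1, 0)
      · have h1' : D2 (x1, x2) = (x1, x2 - 1) := by simp [D2]; omega
        have h2' : D2 (x1 + 1, x2) = (x1 + 1, x2 - 1) := by simp [D2]; omega
        rw [h1', h2']
        exact hmono1 (x1, x2 - 1)
    · exact hmono1 (x1, x2)
  have hT2b : ∀ x : ℕ × ℕ, T2 bmax mu2 c2 v (x.1, x.2 + 1) ≥ T2 bmax mu2 c2 v x := by
    intro ⟨x1, x2⟩
    unfold T2
    apply key2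
    · have h2' : D2 (x1, x2 + 1) = (x1, x2) := by simp [D2]
      rw [h2']
      rcases Nat.eq_zero_or_pos x2 with h | h
      · subst h; simp [D2]
      · have h1' : D2 (x1, x2) = (x1, x2 - 1) := by simp [D2]; omega
        rw [h1']
        have := hmono2 (x1, x2 - 1)
        have hx : x2 - 1 + 1 = x2 := by omega
        rwa [hx] at this
    · exact hmono2 (x1, x2)
  refine ⟨hT1a, hT1b, hT2a, hT2b, ?_, ?_⟩
  · intro ⟨x1, x2⟩
    unfold T
    have h1' := hT1a (x1, x2)
    have h2' := hT2a (x1, x2)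
    have h3 : lam * v (x1 + 1, x2) ≤ lam * v (x1 + 1 + 1, x2) :=
      mul_le_mul_of_nonneg_left (hmono1 (x1 + 1, x2)) hlam.le
    have h4 : h1 * (x1 : ℝ) ≤ h1 * ((x1 : ℝ) + 1) := by nlinarith
    simp only [ge_iff_le] at *
    push_cast
    linarith
  · intro ⟨x1, x2⟩
    unfold T
    have h1' := hT1b (x1, x2)
    have h2' := hT2b (x1, x2)
    have h3 : lam * v (x1 + 1, x2) ≤ lam * v (x1 + 1, x2 + 1) :=
      mul_le_mul_of_nonneg_left (hmono2 (x1 + 1, x2)) hlam.le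
    have h4 : h2 * (x2 : ℝ) ≤ h2 * ((x2 : ℝ) + 1) := by nlinarith
    simp only [ge_iff_le] at *
    push_cast
    linarith
end

section
/- The dynamic programming operator preserves the inequality of Property 4.1(ii) away from the boundary (induction step of Property 4.1(ii)): assume 2h₂ ≥ h₁, and let v : E → ℝ satisfy v(y + e₁) ≥ v(y) and v(y + e₂) ≥ v(y) for all y ∈ E, and v(y − e₁ + e₂) ≥ v(y − e₂) for all y = (y₁, y₂) with y₁ ≥ 1 and y₂ ≥ 1. Then for every x = (x₁, x₂) with x₁ ≥ 1 and x₂ ≥ 2, one has Tv(x − e₁ + e₂) ≥ Tv(x − e₂). -/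
open Set

lemma sInf_mono_aux (amax : ℝ) (mu c : ℝ → ℝ)
    (hmuc : ContinuousOn mu (Icc 0 amax)) (hcc : ContinuousOn c (Icc 0 amax))
    (hmum : MonotoneOn mu (Icc 0 amax)) (hmu0 : mu 0 = 0) (hamax : 0 < amax)
    (pA qA pB qB : ℝ) (hp : pB ≤ pA) (hq : qB ≤ qA) :
    sInf ((fun a => mu a * pB + (mu amax - mu a) * qB + c a) '' Icc 0 amax) ≤
    sInf ((fun a => mu a * pA + (mu amax - mu a) * qA + c a) '' Icc 0 amax) := by
  have hne : (Icc (0:ℝ) amax).Nonempty := ⟨0, by constructor <;> [rfl; exact hamax.le]⟩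
  have hcontB : ContinuousOn (fun a => mu a * pB + (mu amax - mu a) * qB + c a)
      (Icc 0 amax) :=
    (((hmuc.mul continuousOn_const).add
      ((continuousOn_const.sub hmuc).mul continuousOn_const))).add hcc
  have hbdd : BddBelow ((fun a => mu a * pB + (mu amax - mu a) * qB + c a) '' Icc 0 amax) :=
    (isCompact_Icc.image_of_continuousOn hcontB).bddBelow
  apply le_csInf (hne.image _)
  rintro y ⟨a, ha, rfl⟩
  have h0a : 0 ≤ mu a := hmu0 ▸ hmum ⟨le_refl 0, hamax.le⟩ ha ha.1
  have hsub : 0 ≤ mu amax - mu a :=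
    sub_nonneg.2 (hmum ha ⟨hamax.le, le_refl amax⟩ ha.2)
  calc sInf ((fun a => mu a * pB + (mu amax - mu a) * qB + c a) '' Icc 0 amax)
      ≤ mu a * pB + (mu amax - mu a) * qB + c a := csInf_le hbdd (mem_image_of_mem _ ha)
    _ ≤ mu a * pA + (mu amax - mu a) * qA + c a := by
        gcongr <;> assumption

theorem T_preserves_property_4_1_ii
    (lam amax bmax h1 h2 : ℝ) (mu1 mu2 c1 c2 : ℝ → ℝ)
    (hlam : 0 < lam) (hamax : 0 < amax) (hbmax : 0 < bmax)
    (hmu1c : ContinuousOn mu1 (Icc 0 amax)) (hmu1m : StrictMonoOn mu1 (Icc 0 amax))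
    (hmu2c : ContinuousOn mu2 (Icc 0 bmax)) (hmu2m : StrictMonoOn mu2 (Icc 0 bmax))
    (hc1c : ContinuousOn c1 (Icc 0 amax)) (hc1m : StrictMonoOn c1 (Icc 0 amax))
    (hc2c : ContinuousOn c2 (Icc 0 bmax)) (hc2m : StrictMonoOn c2 (Icc 0 bmax))
    (hmu10 : mu1 0 = 0) (hmu20 : mu2 0 = 0) (hc10 : c1 0 = 0) (hc20 : c2 0 = 0)
    (hh1 : 0 ≤ h1) (hh2 : 0 ≤ h2)
    (huni : lam + mu1 amax + mu2 bmax = 1)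
    (hh : 2 * h2 ≥ h1)
    (v : ℕ × ℕ → ℝ)
    (hmono1 : ∀ y : ℕ × ℕ, v (y.1 + 1, y.2) ≥ v y)
    (hmono2 : ∀ y : ℕ × ℕ, v (y.1, y.2 + 1) ≥ v y)
    (hv : ∀ y : ℕ × ℕ, 1 ≤ y.1 → 1 ≤ y.2 → v (y.1 - 1, y.2 + 1) ≥ v (y.1, y.2 - 1))
    (x : ℕ × ℕ) (hx1 : 1 ≤ x.1) (hx2 : 2 ≤ x.2) :
    T lam amax bmax h1 h2 mu1 mu2 c1 c2 v (x.1 - 1, x.2 + 1) ≥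
      T lam amax bmax h1 h2 mu1 mu2 c1 c2 v (x.1, x.2 - 1) := by
  obtain ⟨x1, x2⟩ := x
  simp only at hx1 hx2
  obtain ⟨n, rfl⟩ : ∃ n, x1 = n + 1 := ⟨x1 - 1, by omega⟩
  obtain ⟨m, rfl⟩ : ∃ m, x2 = m + 2 := ⟨x2 - 2, by omega⟩
  have hA : ((n + 1 - 1 : ℕ), (m + 2 + 1 : ℕ)) = ((n : ℕ), (m + 3 : ℕ)) := by simp
  have hB : ((n + 1 : ℕ), (m + 2 - 1 : ℕ)) = ((n + 1 : ℕ), (m + 1 : ℕ)) := by simp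
  rw [hA, hB]
  have hvAB : v (n + 1, m + 1) ≤ v (n, m + 3) := by
    have := hv (n + 1, m + 2) (by omega) (by omega); simpa using this
  have hlamterm : v (n + 1 + 1, m + 1) ≤ v (n + 1, m + 3) := by
    have := hv (n + 2, m + 2) (by omega) (by omega)
    simpa [Nat.add_sub_cancel] using this
  have hT1 : T1 amax mu1 c1 v (n + 1, m + 1) ≤ T1 amax mu1 c1 v (n, m + 3) := by
    unfold T1
    apply sInf_mono_aux amax mu1 c1 hmu1c hc1c hmu1m.monotoneOn hmu10 hamax
    · have hD1B : D1 (n + 1, m + 1) = (n, m + 2) := by simp [D1]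
      rw [hD1B]
      rcases n with _ | k
      · have hD1A : D1 (0, m + 3) = (0, m + 3) := by simp [D1]
        rw [hD1A]
        have := hmono2 (0, m + 2); simpa using this
      · have hD1A : D1 (k + 1, m + 3) = (k, m + 4) := by simp [D1]
        rw [hD1A]
        have := hv (k + 1, m + 3) (by omega) (by omega)
        simpa using this
    · exact hvAB
  have hT2 : T2 bmax mu2 c2 v (n + 1, m + 1) ≤ T2 bmax mu2 c2 v (n, m + 3) := by
    unfold T2
    apply sInf_mono_aux bmax mu2 c2 hmu2c hc2c hmu2m.monotoneOn hmu20 hbmax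
    · have hD2B : D2 (n + 1, m + 1) = (n + 1, m) := by simp [D2]
      have hD2A : D2 (n, m + 3) = (n, m + 2) := by simp [D2]
      rw [hD2A, hD2B]
      have := hv (n + 1, m + 1) (by omega) (by omega)
      simpa using this
    · exact hvAB
  simp only [T, ge_iff_le]
  have hlt : lam * v (n + 1 + 1, m + 1) ≤ lam * v (n + 1, m + 3) :=
    mul_le_mul_of_nonneg_left hlamterm hlam.le
  push_cast
  nlinarith [hT1, hT2, hlt]
end
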